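/- arXiv:1508.05235 — 11 statements merged into one kernel-verified Lean document; each statement's English description precedes it below -/
import Mathlib

section
/- Let n = 2k+1 be odd. Then 2^(n-1) · n! · x_1 x_2 ⋯ x_n = Σ_{I ⊆ [n], |I| ≤ k} (-1)^{|I|} (δ(I,1)x_1 + δ(I,2)x_2 + ⋯ + δ(I,n)x_n)^n, as a polynomial identity over ℂ. -/
open MvPolynomial Finset

/-! Expanding each power by the multinomial theorem, the coefficient of `x (p 0) ⋯ x (p (n-1))`,
`p : Fin n → Fin n`, in the signed sum over *all* `I` is `∏ i, (1 - (-1) ^ #(p⁻¹ i))`. It vanishes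
unless `p` is a permutation, when it is `2 ^ n`; so the full sum is `2 ^ n n! x_1 ⋯ x_n`. For odd `n`
passing from `I` to its complement flips both the sign `(-1) ^ #I` and the odd power, so the terms
of `I` and `Iᶜ` agree and the sum over `#I ≤ k` is half of the full sum. -/

theorem sum_powerset_neg_one_pow_card_mul_prod {R ι : Type*} [CommRing R] (s : Finset ι)
    (c : ι → ℕ) :
    ∑ I ∈ s.powerset, (-1 : R) ^ #I * ∏ i ∈ I, (-1) ^ c i = ∏ i ∈ s, (1 - (-1) ^ c i) := by
  simp_rw [sub_eq_add_neg, prod_one_add, prod_neg]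

section SignedSums

variable {R ι : Type*} [CommRing R] [Fintype ι] [DecidableEq ι]

theorem prod_ite_mem_neg_one_comp (I : Finset ι) {m : ℕ} (p : Fin m → ι) :
    ∏ j, (if p j ∈ I then (-1 : R) else 1) = ∏ i ∈ I, (-1) ^ #{j | p j = i} := by
  rw [← prod_fiberwise' univ p (fun i => if i ∈ I then (-1 : R) else 1)]
  simp_rw [prod_const, ite_pow, one_pow]
  rw [prod_ite_mem, univ_inter]

theorem sum_powerset_neg_one_pow_card_mul_prod_ite_mem {m : ℕ} (p : Fin m → ι) :
    ∑ I ∈ (univ : Finset ι).powerset, (-1 : R) ^ #I * ∏ j, (if p j ∈ I then (-1 : R) else 1) =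
      ∏ i, (1 - (-1) ^ #{j | p j = i}) := by
  simp_rw [prod_ite_mem_neg_one_comp]
  exact sum_powerset_neg_one_pow_card_mul_prod univ _

theorem prod_one_sub_neg_one_pow_card_fiber_of_not_surjective {m : ℕ} {p : Fin m → ι}
    (hp : ¬ Function.Surjective p) : ∏ i, (1 - (-1 : R) ^ #{j | p j = i}) = 0 := by
  obtain ⟨i, hi⟩ := not_forall.mp hp
  refine prod_eq_zero (mem_univ i) ?_
  rw [filter_false_of_mem fun j _ => fun h => hi ⟨j, h⟩, card_empty, pow_zero, sub_self]

theorem prod_one_sub_neg_one_pow_card_fiber_of_bijective {m : ℕ} {p : Fin m → ι}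
    (hp : Function.Bijective p) :
    ∏ i, (1 - (-1 : R) ^ #{j | p j = i}) = 2 ^ Fintype.card ι := by
  have hfiber : ∀ i, #{j | p j = i} = 1 := by
    intro i
    obtain ⟨j, rfl⟩ := hp.surjective i
    rw [card_eq_one]
    exact ⟨j, by ext; simp [hp.injective.eq_iff]⟩
  simp only [hfiber, pow_one, sub_neg_eq_add, prod_const, card_univ]
  norm_num

end SignedSums

theorem sum_powerset_neg_one_pow_card_mul_sum_ite_pow {R : Type*} [CommRing R] {n : ℕ}
    (x : Fin n → R) :
    ∑ I ∈ (univ : Finset (Fin n)).powerset,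
        (-1 : R) ^ #I * (∑ i, (if i ∈ I then (-1 : R) else 1) * x i) ^ n =
      2 ^ n * n.factorial * ∏ i, x i := by
  calc _ = ∑ p : Fin n → Fin n, (∏ i, (1 - (-1 : R) ^ #{j | p j = i})) * ∏ j, x (p j) := by
          simp_rw [Fintype.sum_pow, mul_sum]
          rw [sum_comm]
          refine sum_congr rfl fun p _ => ?_
          rw [← sum_powerset_neg_one_pow_card_mul_prod_ite_mem, sum_mul]
          refine sum_congr rfl fun I _ => ?_
          rw [prod_mul_distrib, mul_assoc]
    _ = ∑ σ : Equiv.Perm (Fin n), 2 ^ n * ∏ i, x i := by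
          refine (Fintype.sum_of_injective (fun σ : Equiv.Perm (Fin n) => ⇑σ)
            DFunLike.coe_injective _ _ ?_ ?_).symm
          · intro p hp
            refine mul_eq_zero_of_left
              (prod_one_sub_neg_one_pow_card_fiber_of_not_surjective fun hs => hp ?_) _
            exact ⟨Equiv.ofBijective p ⟨Finite.injective_iff_surjective.mpr hs, hs⟩, rfl⟩
          · intro σ
            rw [prod_one_sub_neg_one_pow_card_fiber_of_bijective σ.bijective, Fintype.card_fin,
              Equiv.prod_comp σ x]
    _ = _ := by
          rw [sum_const, card_univ, Fintype.card_perm, Fintype.card_fin, nsmul_eq_mul]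
          ring

section Complement

variable {R ι : Type*} [CommRing R] [Fintype ι] [DecidableEq ι]

theorem sum_ite_mem_compl_mul (I : Finset ι) (x : ι → R) :
    ∑ i, (if i ∈ Iᶜ then (-1 : R) else 1) * x i = -∑ i, (if i ∈ I then (-1 : R) else 1) * x i := by
  rw [← sum_neg_distrib]
  refine sum_congr rfl fun i _ => ?_
  by_cases h : i ∈ I <;> simp [h]

theorem neg_one_pow_card_compl (h : Odd (Fintype.card ι)) (I : Finset ι) :
    (-1 : R) ^ #Iᶜ = -(-1) ^ #I := by
  have hsum : (-1 : R) ^ #Iᶜ * (-1) ^ #I = -1 := by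
    rw [← pow_add, card_compl_add_card, h.neg_one_pow]
  calc (-1 : R) ^ #Iᶜ = (-1) ^ #Iᶜ * ((-1) ^ #I * (-1) ^ #I) := by
        rw [← pow_add, ← two_mul, pow_mul, neg_one_sq, one_pow, mul_one]
    _ = -(-1) ^ #I := by rw [← mul_assoc, hsum, neg_one_mul]

theorem sum_powerset_eq_two_nsmul_sum_card_le {M : Type*} [AddCommMonoid M] {k : ℕ}
    (hk : Fintype.card ι = 2 * k + 1) (f : Finset ι → M) (hf : ∀ I, f Iᶜ = f I) :
    ∑ I ∈ (univ : Finset ι).powerset, f I =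
      2 • ∑ I ∈ (univ : Finset ι).powerset.filter (fun I => #I ≤ k), f I := by
  rw [← sum_filter_add_sum_filter_not _ (fun I => #I ≤ k), two_nsmul, add_comm]
  congr 1
  refine sum_nbij' compl compl ?_ ?_ (fun I _ => compl_compl I) (fun I _ => compl_compl I)
    (fun I _ => (hf I).symm)
  all_goals
    intro I hI
    have := card_le_univ I
    simp only [mem_filter, mem_powerset, subset_univ, true_and, card_compl] at hI ⊢
    omega

end Complement

/-- Symmetric form of Fischer's decomposition for odd `n = 2k+1`:
`2^(n-1) n! x_1⋯x_n = ∑_{I ⊆ [n], |I| ≤ k} (-1)^{|I|} (δ(I,1)x_1 + ⋯ + δ(I,n)x_n)^n`. -/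
theorem fischer_symmetric_odd (n k : ℕ) (hn : n = 2 * k + 1) :
    ((2 ^ (n - 1) * n.factorial : ℕ) : MvPolynomial (Fin n) ℂ) * ∏ i, X i =
      ∑ I ∈ (Finset.univ : Finset (Fin n)).powerset.filter (fun I => I.card ≤ k),
        (-1 : MvPolynomial (Fin n) ℂ) ^ I.card *
          (∑ i, (if i ∈ I then (-1 : MvPolynomial (Fin n) ℂ) else 1) * X i) ^ n := by
  have hodd : Odd n := hn ▸ odd_two_mul_add_one k
  have hcard : Odd (Fintype.card (Fin n)) := by rwa [Fintype.card_fin]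
  have halve := sum_powerset_eq_two_nsmul_sum_card_le (by rw [Fintype.card_fin, hn])
    (fun I : Finset (Fin n) => (-1 : MvPolynomial (Fin n) ℂ) ^ #I *
      (∑ i, (if i ∈ I then (-1 : MvPolynomial (Fin n) ℂ) else 1) * X i) ^ n)
    (fun I => by
      simp only [neg_one_pow_card_compl hcard, sum_ite_mem_compl_mul, hodd.neg_pow]
      ring)
  refine mul_left_cancel₀ (two_ne_zero (α := MvPolynomial (Fin n) ℂ)) ?_
  calc _ = (2 ^ n * n.factorial : MvPolynomial (Fin n) ℂ) * ∏ i, X i := by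
        rw [hn, pow_succ]; push_cast; ring
    _ = _ := by rw [← sum_powerset_neg_one_pow_card_mul_sum_ite_pow, halve, two_nsmul, two_mul]
end

section
/- Let d = 2k+1 be odd and n ≥ d. Then 2^(d-1) · d! · σ_{d,n} = Σ_{I ⊆ [n], |I| ≤ k} (-1)^{|I|} · C(n-k-|I|-1, k-|I|) · (δ(I,1)x_1 + ⋯ + δ(I,n)x_n)^d, where σ_{d,n} is the elementary symmetric polynomial of degree d in n variables, C denotes binomial coefficient, and δ(I,i) = -1 if i ∈ I, else 1. -/
open MvPolynomial Finset

/-!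
Compare the coefficients of a monomial `x^α` with `|α| = 2k+1`. By the multinomial theorem the
right-hand side contributes `multinomial α · ∑_I (-1)^|I| C(n-k-|I|-1, k-|I|) (-1)^(α(I))`.
Writing `a` for the number of odd `α i`, the inner sum is
`∑_{m ≤ k} C(n-k-m-1, k-m) [X^m] (1+X)^a (1-X)^(n-a)`, i.e. the coefficient of `X^k` in
`(1+X)^a (1-X)^(n-a) (1-X)^(-(n-2k))`. Here `a` is odd and `a ≤ 2k+1`. If `a ≤ 2k` this is the
middle coefficient of `(1+X)^a (1-X)^(2k-a)`, which vanishes because that polynomial is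
anti-palindromic; if `a = 2k+1`, i.e. `x^α` is squarefree, it is `∑_{m ≤ k} C(2k+1, m) = 4^k`.
-/

namespace PowerSeries

variable {R : Type*} [CommRing R]

theorem coeff_mul_invOneSubPow (f : R⟦X⟧) {N : ℕ} (hN : 0 < N) (k : ℕ) :
    coeff k (f * (invOneSubPow R N : R⟦X⟧)) =
      ∑ m ∈ range (k + 1), ((N - 1 + (k - m)).choose (N - 1) : R) * coeff m f := by
  rw [coeff_mul, Nat.sum_antidiagonal_eq_sum_range_succ_mk,
    invOneSubPow_val_eq_mk_sub_one_add_choose_of_pos _ _ hN]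
  simp only [coeff_mk, mul_comm]

end PowerSeries

namespace Polynomial

variable {R : Type*} [CommRing R]

theorem reflect_pow {p : R[X]} {N : ℕ} (hp : p.natDegree ≤ N) (m : ℕ) :
    reflect (m * N) (p ^ m) = reflect N p ^ m := by
  induction m with
  | zero => simp
  | succ m ih =>
    rw [pow_succ, add_mul, one_mul, reflect_mul _ _ (natDegree_pow_le_of_le m hp) hp, ih,
      pow_succ]

theorem reflect_one_add_X_pow_mul_one_sub_X_pow (a b : ℕ) :
    reflect (a + b) ((1 + X : R[X]) ^ a * (1 - X) ^ b) =
      (-1) ^ b * ((1 + X) ^ a * (1 - X) ^ b) := by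
  have h₁ : (1 + X : R[X]).natDegree ≤ 1 := by compute_degree
  have h₂ : (1 - X : R[X]).natDegree ≤ 1 := by compute_degree
  have r₁ : reflect 1 (1 + X : R[X]) = 1 + X := by
    rw [reflect_add, reflect_one, ← pow_one X, reflect_monomial]
    simp [add_comm]
  have r₂ : reflect 1 (1 - X : R[X]) = -(1 - X) := by
    rw [reflect_sub, reflect_one, ← pow_one X, reflect_monomial]
    simp
  have p₁ := reflect_pow h₁ a
  have p₂ := reflect_pow h₂ b
  have d₁ := natDegree_pow_le_of_le a h₁
  have d₂ := natDegree_pow_le_of_le b h₂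
  rw [mul_one] at p₁ p₂ d₁ d₂
  rw [reflect_mul _ _ d₁ d₂, p₁, p₂, r₁, r₂, neg_pow]
  ring

theorem coeff_one_add_X_pow_mul_one_sub_X_pow_of_odd [IsAddTorsionFree R] {a b k : ℕ}
    (hab : a + b = 2 * k) (hb : Odd b) :
    ((1 + X : R[X]) ^ a * (1 - X) ^ b).coeff k = 0 := by
  have h := congrArg (coeff · k) (reflect_one_add_X_pow_mul_one_sub_X_pow (R := R) a b)
  simp only [coeff_reflect, hb.neg_one_pow, neg_one_mul, coeff_neg, hab] at h
  rwa [revAt_le (by omega), show 2 * k - k = k by omega, self_eq_neg] at h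

theorem sum_choose_mul_coeff_one_add_X_pow_mul_one_sub_X_pow {k n a b : ℕ}
    (hn : 2 * k + 1 ≤ n) (hab : a + b = n) (ha : Odd a) (hak : a ≤ 2 * k + 1) :
    ∑ m ∈ range (k + 1),
        ((n - k - m - 1).choose (k - m) : ℤ) * ((1 + X : ℤ[X]) ^ a * (1 - X) ^ b).coeff m =
      if a = 2 * k + 1 then 4 ^ k else 0 := by
  obtain ⟨N, rfl⟩ : ∃ N, n = 2 * k + 1 + N := ⟨n - (2 * k + 1), by omega⟩
  -- the weights `C(n-k-m-1, k-m)` are the coefficients of `(1 - X)^(-(n-2k))`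
  have hweights : ∀ P : ℤ[X],
      ∑ m ∈ range (k + 1), ((2 * k + 1 + N - k - m - 1).choose (k - m) : ℤ) * P.coeff m =
        PowerSeries.coeff k ((P : PowerSeries ℤ) * (PowerSeries.invOneSubPow ℤ (N + 1) :
          PowerSeries ℤ)) := by
    intro P
    rw [PowerSeries.coeff_mul_invOneSubPow _ N.succ_pos]
    refine sum_congr rfl fun m hm => ?_
    rw [mem_range] at hm
    rw [coeff_coe, Nat.succ_sub_one, Nat.choose_symm_add,
      show N + (k - m) = 2 * k + 1 + N - k - m - 1 by omega]
  rw [hweights]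
  split_ifs with h
  · subst h
    obtain rfl : b = N := by omega
    rw [coe_mul, coe_pow (n := b), coe_sub, coe_one, coe_X, mul_assoc, add_comm b 1,
      PowerSeries.one_sub_pow_mul_invOneSubPow_val_add_eq_invOneSubPow_val,
      PowerSeries.coeff_mul_invOneSubPow _ one_pos]
    simp only [tsub_self, Nat.choose_zero_right, Nat.cast_one, one_mul, coeff_coe,
      coeff_one_add_X_pow]
    exact_mod_cast Nat.sum_range_choose_halfway k
  · obtain rfl : b = (2 * k - a) + (N + 1) := by omega
    have hcancel :=
      PowerSeries.one_sub_pow_mul_invOneSubPow_val_add_eq_invOneSubPow_val ℤ 0 (N + 1)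
    rw [zero_add, PowerSeries.invOneSubPow_zero, Units.val_one] at hcancel
    rw [pow_add, ← mul_assoc, coe_mul, coe_pow (n := N + 1), coe_sub, coe_one, coe_X, mul_assoc,
      hcancel, mul_one, coeff_coe]
    exact coeff_one_add_X_pow_mul_one_sub_X_pow_of_odd (by omega)
      (Nat.Even.sub_odd (by omega) (even_two_mul k) ha)

theorem sum_powerset_filter_card_le_mul_prod {ι : Type*} [Fintype ι] (g : ℕ → R) (η : ι → R)
    (k : ℕ) :
    ∑ I ∈ univ.powerset.filter (fun I => #I ≤ k), g #I * ∏ i ∈ I, η i =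
      ∑ m ∈ range (k + 1), g m * (∏ i, (1 + C (η i) * X)).coeff m := by
  simp only [prod_one_add, prod_mul_distrib, prod_const, ← map_prod, finsetSum_coeff,
    coeff_C_mul_X_pow, mul_sum, mul_ite, mul_zero]
  rw [sum_comm, sum_filter]
  refine sum_congr rfl fun I _ => ?_
  simp only [sum_ite_eq', mem_range, Nat.lt_succ_iff]

theorem prod_one_add_C_neg_one_pow_succ_mul_X {ι : Type*} [Fintype ι] (α : ι → ℕ) :
    ∏ i, (1 + C ((-1 : ℤ) ^ (α i + 1)) * X) =
      (1 + X) ^ (∑ i, α i % 2) * (1 - X) ^ (∑ i, (1 - α i % 2)) := by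
  rw [← prod_pow_eq_pow_sum, ← prod_pow_eq_pow_sum, ← prod_mul_distrib]
  refine prod_congr rfl fun i _ => ?_
  rcases Nat.even_or_odd (α i) with h | h
  · simp [pow_succ, h.neg_one_pow, Nat.even_iff.mp h, sub_eq_add_neg]
  · simp [pow_succ, h.neg_one_pow, Nat.odd_iff.mp h]

end Polynomial

theorem sum_powerset_card_le_neg_one_pow_mul_choose {ι : Type*} [Fintype ι] {k : ℕ}
    (hk : 2 * k + 1 ≤ Fintype.card ι) (α : ι → ℕ) (hα : ∑ i, α i = 2 * k + 1) :
    ∑ I ∈ univ.powerset.filter (fun I => #I ≤ k),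
        (-1 : ℤ) ^ #I * ((Fintype.card ι - k - #I - 1).choose (k - #I) : ℤ) *
          (-1) ^ ∑ i ∈ I, α i =
      if ∀ i, α i ≤ 1 then 4 ^ k else 0 := by
  have hab : ∑ i, α i % 2 + ∑ i, (1 - α i % 2) = Fintype.card ι := by
    rw [← sum_add_distrib, ← card_univ, card_eq_sum_ones]
    exact sum_congr rfl fun i _ => by omega
  have hodd : Odd (∑ i, α i % 2) := by
    rw [Nat.odd_iff, ← sum_nat_mod, hα]
    omega
  have hle : ∑ i, α i % 2 ≤ 2 * k + 1 := hα ▸ sum_le_sum fun i _ => Nat.mod_le _ _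
  have hsquarefree : ∑ i, α i % 2 = 2 * k + 1 ↔ ∀ i, α i ≤ 1 := by
    rw [← hα, sum_eq_sum_iff_of_le fun i _ => Nat.mod_le _ _]
    simp only [mem_univ, true_implies, Nat.mod_eq_iff_lt two_ne_zero]
    exact forall_congr' fun i => by omega
  have hsign : ∀ I : Finset ι,
      (-1 : ℤ) ^ #I * (-1) ^ ∑ i ∈ I, α i = ∏ i ∈ I, (-1) ^ (α i + 1) := fun I => by
    rw [prod_pow_eq_pow_sum, sum_add_distrib, card_eq_sum_ones, pow_add, mul_comm]
  calc _ = ∑ I ∈ univ.powerset.filter (fun I => #I ≤ k),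
        ((Fintype.card ι - k - #I - 1).choose (k - #I) : ℤ) * ∏ i ∈ I, (-1) ^ (α i + 1) :=
        sum_congr rfl fun I _ => by rw [← hsign]; ring
    _ = _ := by
      rw [Polynomial.sum_powerset_filter_card_le_mul_prod
          (fun m => ((Fintype.card ι - k - m - 1).choose (k - m) : ℤ)),
        Polynomial.prod_one_add_C_neg_one_pow_succ_mul_X,
        Polynomial.sum_choose_mul_coeff_one_add_X_pow_mul_one_sub_X_pow hk hab hodd hle]
      exact if_congr hsquarefree rfl rfl

theorem Finsupp.multinomial_eq_factorial_of_le_one {σ : Type*} [Fintype σ] {s : σ →₀ ℕ}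
    (hs : ∀ i, s i ≤ 1) : s.multinomial = (∑ i, s i).factorial := by
  have h := Nat.multinomial_spec s.support s
  rw [prod_eq_one fun i _ => by have := hs i; interval_cases s i <;> rfl, one_mul] at h
  rw [Finsupp.multinomial_eq, h]
  exact congrArg Nat.factorial (Finsupp.sum_fintype s (fun _ m => m) fun _ => rfl)

namespace MvPolynomial

variable {σ R : Type*} [Fintype σ]

theorem coeff_esymm [CommSemiring R] (s : σ →₀ ℕ) (d : ℕ) :
    coeff s (esymm σ R d) = if ∑ i, s i = d ∧ ∀ i, s i ≤ 1 then 1 else 0 := by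
  classical
  have happly : ∀ (t : Finset σ) i,
      (∑ j ∈ t, Finsupp.single j 1 : σ →₀ ℕ) i = if i ∈ t then 1 else 0 :=
    fun t i => by simp [Finsupp.finsetSum_apply, Finsupp.single_apply]
  rw [esymm_eq_sum_monomial, coeff_sum]
  simp only [coeff_monomial]
  by_cases hs : ∀ i, s i ≤ 1
  · have hsupp : ∀ t : Finset σ, ∑ j ∈ t, Finsupp.single j 1 = s ↔ t = s.support := by
      refine fun t => ⟨?_, ?_⟩
      · rintro rfl
        ext i
        simp [happly]
      · rintro rfl
        ext i
        have := hs i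
        simp only [happly, Finsupp.mem_support_iff]
        split_ifs <;> omega
    have hdeg : ∑ i, s i = #s.support := by
      rw [← Finsupp.sum_fintype s (fun _ m => m) fun _ => rfl, card_eq_sum_ones, Finsupp.sum]
      exact sum_congr rfl fun i hi => by
        have := hs i
        rw [Finsupp.mem_support_iff] at hi
        omega
    simp only [hsupp, sum_ite_eq', mem_powersetCard, subset_univ, true_and, hdeg, hs,
      implies_true, and_true, eq_comm]
  · rw [if_neg fun h => hs h.2]
    refine sum_eq_zero fun t _ => if_neg ?_
    rintro rfl
    exact hs fun i => by rw [happly]; split_ifs <;> omega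

theorem coeff_sum_C_mul_sum_sign_mul_X_pow [CommRing R] [DecidableEq σ] (T : Finset (Finset σ))
    (c : Finset σ → R) (s : σ →₀ ℕ) (d : ℕ) :
    coeff s (∑ I ∈ T, C (c I) * (∑ i, (if i ∈ I then -1 else 1) * X i) ^ d) =
      if ∑ i, s i = d then s.multinomial * ∑ I ∈ T, c I * (-1) ^ ∑ i ∈ I, s i else 0 := by
  have hsmul : ∀ I : Finset σ, ∑ i, (if i ∈ I then -1 else 1) * X i =
      ∑ i, (if i ∈ I then (-1 : R) else 1) • (X i : MvPolynomial σ R) := fun I => by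
    simp only [smul_eq_C_mul, apply_ite C, map_neg, map_one]
  have hdegree : s.sum (fun _ m => m) = ∑ i, s i := Finsupp.sum_fintype _ _ fun _ => rfl
  have hsign : ∀ I : Finset σ, s.prod (fun i m => (if i ∈ I then (-1 : R) else 1) ^ m) =
      (-1) ^ ∑ i ∈ I, s i := fun I => by
    rw [Finsupp.prod_fintype _ _ fun _ => pow_zero _]
    simp only [ite_pow, one_pow, prod_ite_mem, univ_inter, prod_pow_eq_pow_sum]
  simp only [hsmul, coeff_sum, coeff_C_mul, coeff_linearCombination_X_pow_of_fintype, hdegree,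
    hsign]
  split_ifs
  · rw [mul_sum]
    exact sum_congr rfl fun I _ => by ring
  · simp

end MvPolynomial

/-- Power sum decomposition of the elementary symmetric polynomial of odd degree `d = 2k+1`
in `n ≥ d` variables:
`2^(d-1) d! σ_{d,n} = ∑_{I ⊆ [n], |I| ≤ k} (-1)^{|I|} C(n-k-|I|-1, k-|I|) (δ(I,1)x_1 + ⋯)^d`. -/
theorem esymm_odd_decomposition (d k n : ℕ) (hd : d = 2 * k + 1) (hn : d ≤ n) :
    ((2 ^ (d - 1) * d.factorial : ℕ) : MvPolynomial (Fin n) ℂ) * esymm (Fin n) ℂ d =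
      ∑ I ∈ (Finset.univ : Finset (Fin n)).powerset.filter (fun I => I.card ≤ k),
        (-1 : MvPolynomial (Fin n) ℂ) ^ I.card *
          ((n - k - I.card - 1).choose (k - I.card) : MvPolynomial (Fin n) ℂ) *
          (∑ i, (if i ∈ I then (-1 : MvPolynomial (Fin n) ℂ) else 1) * X i) ^ d := by
  subst hd
  have hweight : ∀ I : Finset (Fin n),
      (-1 : MvPolynomial (Fin n) ℂ) ^ #I * ((n - k - #I - 1).choose (k - #I) : MvPolynomial (Fin n) ℂ) =
        C ((-1) ^ #I * ((n - k - #I - 1).choose (k - #I) : ℂ)) := fun I => by simp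
  simp only [hweight]
  ext s
  rw [← map_natCast C, coeff_C_mul, coeff_esymm, coeff_sum_C_mul_sum_sign_mul_X_pow]
  by_cases hdeg : ∑ i, s i = 2 * k + 1
  · have key := congrArg (Int.cast : ℤ → ℂ)
      (sum_powerset_card_le_neg_one_pow_mul_choose (by simpa using hn) s hdeg)
    push_cast [Fintype.card_fin] at key
    simp only [hdeg, true_and, key]
    split_ifs with hsquarefree
    · rw [Finsupp.multinomial_eq_factorial_of_le_one hsquarefree, hdeg, Nat.add_sub_cancel,
        pow_mul]
      push_cast
      ring
    · simp
  · simp [hdeg]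
end

section
/- Let d = 2k+1 be odd, n ≥ d, and let F_{d,n}(x_1,…,x_n) = Σ_{I ⊆ [n], |I| ≤ k} (-1)^{|I|} C(n-k-|I|-1, k-|I|) (δ(I,1)x_1 + ⋯ + δ(I,n)x_n)^d. Then substituting x_n = 0 yields F_{d,n}(x_1,…,x_{n-1},0) = F_{d,n-1}(x_1,…,x_{n-1}). -/
/-!
Split the subsets of `[m+1]` according to whether they contain `m+1`. Once `x_{m+1} = 0`, the
sets `J` and `J ∪ {m+1}` give the same linear form, so the coefficient of its `d`-th power is
`(-1)^j (C(m-k-j, k-j) - C(m-k-j-1, k-j-1)) = (-1)^j C(m-k-j-1, k-j)` with `j = |J|`,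
by Pascal's rule, which is the coefficient in `F_{d,m}`.
-/

open Finset

/-- The expression `F_{d,n}` (depending on `k`, where `d = 2k+1`): the candidate power sum
decomposition of `2^(d-1) d! σ_{d,n}`, as a function of the variables `x : Fin n → ℂ`. -/
noncomputable def Fdn (d k n : ℕ) (x : Fin n → ℂ) : ℂ :=
  ∑ I ∈ (Finset.univ : Finset (Fin n)).powerset.filter (fun I => I.card ≤ k),
    (-1 : ℂ) ^ I.card * ((n - k - I.card - 1).choose (k - I.card) : ℂ) *
      (∑ i, (if i ∈ I then (-1 : ℂ) else 1) * x i) ^ d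

lemma Finset.sum_powerset_map {α β M : Type*} [AddCommMonoid M] (s : Finset α) (e : α ↪ β)
    (f : Finset β → M) :
    ∑ t ∈ (s.map e).powerset, f t = ∑ t ∈ s.powerset, f (t.map e) := by
  classical
  simp_rw [map_eq_image, powerset_image]
  exact sum_image fun _ _ _ _ h => image_injective e.injective h

lemma Fin.sum_powerset_univ_castSucc {M : Type*} [AddCommMonoid M] {m : ℕ}
    (f : Finset (Fin (m + 1)) → M) :
    ∑ I ∈ (univ : Finset (Fin (m + 1))).powerset, f I =
      ∑ J ∈ (univ : Finset (Fin m)).powerset,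
        (f (J.map castSuccEmb) + f (insert (last m) (J.map castSuccEmb))) := by
  rw [univ_castSuccEmb, cons_eq_insert, sum_powerset_insert (by simp), sum_powerset_map,
    sum_powerset_map, sum_add_distrib]

def signedSum {R : Type*} [Ring R] {n : ℕ} (I : Finset (Fin n)) (x : Fin n → R) : R :=
  ∑ i, (if i ∈ I then -1 else 1) * x i

lemma signedSum_snoc_zero {R : Type*} [Ring R] {m : ℕ} {I : Finset (Fin (m + 1))}
    {J : Finset (Fin m)} (h : ∀ i, i.castSucc ∈ I ↔ i ∈ J) (x : Fin m → R) :
    signedSum I (Fin.snoc x 0 : Fin (m + 1) → R) = signedSum J x := by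
  simp [signedSum, Fin.sum_univ_castSucc, h]

/-- The subtractions truncate, so Pascal's rule for these coefficients needs `2k ≤ m`. -/
def fdnCoeff (k n j : ℕ) : ℤ :=
  if j ≤ k then (-1) ^ j * (n - k - j - 1).choose (k - j) else 0

lemma Fdn_eq_sum_powerset (d k n : ℕ) (x : Fin n → ℂ) :
    Fdn d k n x =
      ∑ I ∈ (univ : Finset (Fin n)).powerset, (fdnCoeff k n #I : ℂ) * signedSum I x ^ d := by
  rw [Fdn, sum_filter]
  refine sum_congr rfl fun I _ => ?_
  unfold fdnCoeff signedSum
  split_ifs <;> simp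

lemma fdnCoeff_add_fdnCoeff_succ {k m : ℕ} (h : 2 * k ≤ m) (j : ℕ) :
    fdnCoeff k (m + 1) j + fdnCoeff k (m + 1) (j + 1) = fdnCoeff k m j := by
  unfold fdnCoeff
  rcases lt_trichotomy j k with hj | rfl | hj
  · have e1 : m + 1 - k - j - 1 = (m - k - j - 1) + 1 := by omega
    have e2 : k - j = (k - j - 1) + 1 := by omega
    have e3 : m + 1 - k - (j + 1) - 1 = m - k - j - 1 := by omega
    have e4 : k - (j + 1) = k - j - 1 := by omega
    rw [if_pos hj.le, if_pos (Nat.succ_le_of_lt hj), if_pos hj.le, e1, e2, e3, e4,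
      Nat.choose_succ_succ]
    push_cast
    ring
  · simp
  · rw [if_neg (by omega), if_neg (by omega), if_neg (by omega), add_zero]

/-- Key recursion: for odd `d = 2k+1` and `n = m+1 ≥ d`, substituting `x_n = 0` in `F_{d,n}`
yields `F_{d,n-1}`. -/
theorem Fdn_snoc_zero (d k m : ℕ) (hd : d = 2 * k + 1) (hn : d ≤ m + 1) :
    ∀ x : Fin m → ℂ, Fdn d k (m + 1) (Fin.snoc x 0) = Fdn d k m x := by
  intro x
  rw [Fdn_eq_sum_powerset, Fdn_eq_sum_powerset, Fin.sum_powerset_univ_castSucc]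
  refine sum_congr rfl fun J _ => ?_
  rw [signedSum_snoc_zero (J := J) (by simp), signedSum_snoc_zero (J := J) (by simp), card_map,
    card_insert_of_notMem (by simp), card_map, ← add_mul, ← Int.cast_add,
    fdnCoeff_add_fdnCoeff_succ (by omega)]
end

section
/- For all integers n ≥ 2k+1 ≥ 1, Σ_{i=0}^{k} (-1)^i C(n-k-1-i, k-i) C(n,i) (n-2i)^{2k+1} = 2^{2k} · n! / (n-2k-1)!. -/
open Finset

/-!
Write `n = N + 2k + 1` and let `P(x) = (N+k-x)(N+k-1-x)⋯(k+1-x) · (n-2x)^(2k+1)`, a polynomial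
of degree `n` with leading coefficient `(-1)^n 2^(2k+1)`. For `i ≤ k`,
`P(i) = N! C(N+k-i, k-i) (n-2i)^(2k+1)`, so `N!` times the sum in question is
`∑_{i ≤ k} (-1)^i C(n,i) P(i)`.
The full alternating sum `∑_{i ≤ n} (-1)^i C(n,i) P(i)` is an `n`-th finite difference of `P`,
hence equals `n! 2^(2k+1)`. But `P` vanishes at `k < i < n-k`, and `P(n-x) = (-1)^n P(x)` makes
the terms at `i` and `n-i` equal, so the full sum is twice the sum over `i ≤ k`.
-/

open Nat Polynomial

theorem neg_one_pow_mul_neg_one_pow_sub {R : Type*} [Monoid R] [HasDistribNeg R] {i d : ℕ}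
    (h : i ≤ d) : (-1 : R) ^ d * (-1) ^ (d - i) = (-1) ^ i := by
  rw [← pow_add, show d + (d - i) = i + 2 * (d - i) by omega, pow_add, pow_mul, neg_one_sq,
    one_pow, mul_one]

theorem Finset.sum_range_eq_two_nsmul_of_reflect {M : Type*} [AddCommMonoid M] (f : ℕ → M)
    {n k : ℕ} (hk : 2 * k < n) (hmid : ∀ i, k < i → i < n - k → f i = 0)
    (hreflect : ∀ i ≤ k, f (n - i) = f i) :
    ∑ i ∈ range (n + 1), f i = 2 • ∑ i ∈ range (k + 1), f i := by
  obtain ⟨N, rfl⟩ : ∃ N, n = k + 1 + N + k := ⟨n - 2 * k - 1, by omega⟩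
  have hzero : ∑ i ∈ range N, f (k + 1 + i) = 0 :=
    sum_eq_zero fun i hi => hmid _ (by omega) (by have := mem_range.mp hi; omega)
  rw [show k + 1 + N + k + 1 = k + 1 + N + (k + 1) by omega, sum_range_add, sum_range_add,
    hzero, add_zero, two_nsmul, ← sum_range_reflect _ (k + 1)]
  congr 1
  refine sum_congr rfl fun i hi => ?_
  have hi : i ≤ k := Nat.lt_succ_iff.mp (mem_range.mp hi)
  rw [← hreflect (k + 1 - 1 - i) (by omega)]
  congr 1
  omega

theorem Polynomial.sum_range_neg_one_pow_mul_choose_mul_eval {R : Type*} [CommRing R]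
    {P : R[X]} {d : ℕ} (hP : P.natDegree ≤ d) :
    ∑ i ∈ range (d + 1), (-1) ^ i * (d.choose i : R) * P.eval (i : R) =
      (-1) ^ d * d ! * P.coeff d := by
  have hdiff : (fwdDiff 1)^[d] P.eval 0 = d ! * P.coeff d := by
    rcases hP.lt_or_eq with hlt | rfl
    · simp [fwdDiff_iter_eq_zero_of_degree_lt hlt, coeff_eq_zero_of_natDegree_lt hlt]
    · simp [fwdDiff_iter_degree_eq_factorial, mul_comm]
  rw [fwdDiff_iter_eq_sum_shift] at hdiff
  rw [mul_assoc, ← hdiff, mul_sum]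
  refine sum_congr rfl fun i hi => ?_
  simp only [zsmul_eq_mul, zero_add, nsmul_one, Int.cast_mul, Int.cast_pow, Int.cast_neg,
    Int.cast_one, Int.cast_natCast,
    ← neg_one_pow_mul_neg_one_pow_sub (R := R) (Nat.lt_succ_iff.mp (mem_range.mp hi))]
  ring

theorem Polynomial.natDegree_C_sub_C_mul_X_le {R : Type*} [Ring R] (a b : R) :
    (C a - C b * X).natDegree ≤ 1 := by
  compute_degree

theorem descPochhammer_eval_reflect {R : Type*} [CommRing R] (N : ℕ) (r : R) :
    (descPochhammer R N).eval ((N : R) - 1 - r) = (-1) ^ N * (descPochhammer R N).eval r := by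
  rw [descPochhammer_eval_eq_ascPochhammer, ← ascPochhammer_eval_neg_eq_descPochhammer]
  ring_nf

section descPochhammerComp

variable {R : Type*} [CommRing R] [IsDomain R] (N : ℕ) (a : R)

theorem natDegree_descPochhammer_comp_C_sub_X :
    ((descPochhammer R N).comp (C a - X)).natDegree = N := by
  have : (C a - X).natDegree = 1 := by compute_degree!
  rw [natDegree_comp, descPochhammer_natDegree, this, mul_one]

theorem coeff_descPochhammer_comp_C_sub_X :
    ((descPochhammer R N).comp (C a - X)).coeff N = (-1) ^ N := by
  have hdeg : (C a - X).natDegree = 1 := by compute_degree!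
  have h := coeff_comp_degree_mul_degree (p := descPochhammer R N) (hdeg.trans_ne one_ne_zero)
  rw [descPochhammer_natDegree, hdeg, mul_one, (monic_descPochhammer R N).leadingCoeff,
    one_mul] at h
  rw [h, leadingCoeff, hdeg, coeff_sub, coeff_C, coeff_X_one]
  simp

end descPochhammerComp

noncomputable def summandPoly (N k : ℕ) : ℤ[X] :=
  (descPochhammer ℤ N).comp (C ((N + k : ℕ) : ℤ) - X) *
    (C ((N + 2 * k + 1 : ℕ) : ℤ) - C 2 * X) ^ (2 * k + 1)

namespace summandPoly

variable (N k : ℕ)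

theorem eval_eq (x : ℤ) : (summandPoly N k).eval x =
    (descPochhammer ℤ N).eval ((N + k : ℕ) - x) *
      ((N + 2 * k + 1 : ℕ) - 2 * x) ^ (2 * k + 1) := by
  simp [summandPoly, eval_comp]

theorem eval_of_le {i : ℕ} (hi : i ≤ k) : (summandPoly N k).eval (i : ℤ) =
    N ! * (N + k - i).choose (k - i) * ((N + 2 * k + 1 : ℕ) - 2 * i) ^ (2 * k + 1) := by
  rw [eval_eq, ← Nat.cast_sub (by omega), descPochhammer_eval_eq_descFactorial,
    Nat.descFactorial_eq_factorial_mul_choose, show N + k - i = N + (k - i) by omega,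
    Nat.choose_symm_add]
  push_cast
  ring

theorem eval_of_lt {i : ℕ} (hki : k < i) (hi : i ≤ N + k) :
    (summandPoly N k).eval (i : ℤ) = 0 := by
  rw [eval_eq, ← Nat.cast_sub hi, descPochhammer_eval_coe_nat_of_lt (by omega), zero_mul]

theorem eval_reflect (x : ℤ) : (summandPoly N k).eval ((N + 2 * k + 1 : ℕ) - x) =
    (-1) ^ (N + 2 * k + 1) * (summandPoly N k).eval x := by
  have hW : ((N + k : ℕ) : ℤ) - ((N + 2 * k + 1 : ℕ) - x) =
      N - 1 - (((N + k : ℕ) : ℤ) - x) := by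
    push_cast; ring
  have hL : ((N + 2 * k + 1 : ℕ) : ℤ) - 2 * ((N + 2 * k + 1 : ℕ) - x) =
      -((N + 2 * k + 1 : ℕ) - 2 * x) := by ring
  have hsign : (-1 : ℤ) ^ (N + 2 * k + 1) = -(-1) ^ N := by
    rw [pow_succ, pow_add, pow_mul, neg_one_sq, one_pow]; ring
  rw [eval_eq, eval_eq, hW, descPochhammer_eval_reflect, hL, (odd_two_mul_add_one k).neg_pow,
    hsign]
  ring

theorem natDegree_le : (summandPoly N k).natDegree ≤ N + 2 * k + 1 := by
  have := natDegree_mul_le_of_le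
    (natDegree_descPochhammer_comp_C_sub_X N ((N + k : ℕ) : ℤ)).le
    (natDegree_pow_le_of_le (2 * k + 1)
      (natDegree_C_sub_C_mul_X_le ((N + 2 * k + 1 : ℕ) : ℤ) 2))
  rwa [mul_one, ← add_assoc] at this

theorem coeff_add_two_mul_add_one :
    (summandPoly N k).coeff (N + 2 * k + 1) = (-1) ^ (N + 2 * k + 1) * 2 ^ (2 * k + 1) := by
  rw [summandPoly, show N + 2 * k + 1 = N + (2 * k + 1) * 1 by ring,
    coeff_mul_add_eq_of_natDegree_le (natDegree_descPochhammer_comp_C_sub_X N _).le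
      (natDegree_pow_le_of_le _ (natDegree_C_sub_C_mul_X_le _ _)),
    coeff_pow_of_natDegree_le (natDegree_C_sub_C_mul_X_le _ _),
    coeff_descPochhammer_comp_C_sub_X, coeff_sub, coeff_C, coeff_C_mul_X]
  simp only [one_ne_zero, if_false, if_true, zero_sub, mul_one]
  rw [pow_add (-1 : ℤ), pow_add (-1 : ℤ), neg_pow (2 : ℤ)]
  ring

theorem two_mul_sum_range :
    2 * ∑ i ∈ range (k + 1),
        (-1) ^ i * ((N + 2 * k + 1).choose i : ℤ) * (summandPoly N k).eval (i : ℤ) =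
      (N + 2 * k + 1)! * 2 ^ (2 * k + 1) := by
  have hfull := sum_range_neg_one_pow_mul_choose_mul_eval (natDegree_le N k)
  rw [coeff_add_two_mul_add_one,
    sum_range_eq_two_nsmul_of_reflect _ (k := k) (by omega)] at hfull
  · rw [nsmul_eq_mul, Nat.cast_two] at hfull
    rw [hfull, mul_mul_mul_comm, ← pow_add, Even.neg_one_pow ⟨_, rfl⟩, one_mul]
  · intro i hki hi
    rw [eval_of_lt N k hki (by omega), mul_zero]
  · intro i hi
    rw [Nat.choose_symm (by omega), Nat.cast_sub (by omega), eval_reflect,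
      ← neg_one_pow_mul_neg_one_pow_sub (show i ≤ N + 2 * k + 1 by omega)]
    ring

end summandPoly

/-- The combinatorial identity obtained by evaluating the power sum decomposition of
`σ_{2k+1,n}` at `x_1 = ⋯ = x_n = 1`:
`∑_{i=0}^{k} (-1)^i C(n-k-1-i, k-i) C(n,i) (n-2i)^{2k+1} = 2^{2k} · n!/(n-2k-1)!`. -/
theorem esymm_sum_identity (n k : ℕ) (h : 2 * k + 1 ≤ n) :
    ∑ i ∈ range (k + 1),
        (-1 : ℤ) ^ i * ((n - k - 1 - i).choose (k - i) : ℤ) * (n.choose i : ℤ) *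
          ((n : ℤ) - 2 * i) ^ (2 * k + 1) =
      2 ^ (2 * k) * (n.descFactorial (2 * k + 1) : ℤ) := by
  obtain ⟨N, rfl⟩ : ∃ N, n = N + 2 * k + 1 := ⟨n - (2 * k + 1), by omega⟩
  set S := ∑ i ∈ range (k + 1),
    (-1 : ℤ) ^ i * ((N + 2 * k + 1 - k - 1 - i).choose (k - i) : ℤ) *
      ((N + 2 * k + 1).choose i : ℤ) * (((N + 2 * k + 1 : ℕ) : ℤ) - 2 * i) ^ (2 * k + 1)
  have hsum : ∑ i ∈ range (k + 1), (-1) ^ i * ((N + 2 * k + 1).choose i : ℤ) *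
      (summandPoly N k).eval (i : ℤ) = N ! * S := by
    rw [mul_sum]
    refine sum_congr rfl fun i hi => ?_
    rw [summandPoly.eval_of_le N k (Nat.lt_succ_iff.mp (mem_range.mp hi)),
      show N + k - i = N + 2 * k + 1 - k - 1 - i by omega]
    ring
  have hhalf := summandPoly.two_mul_sum_range N k
  have hfact := Nat.factorial_mul_descFactorial (show 2 * k + 1 ≤ N + 2 * k + 1 by omega)
  rw [show N + 2 * k + 1 - (2 * k + 1) = N by omega] at hfact
  rw [hsum, ← hfact] at hhalf
  refine mul_left_cancel₀ (show (2 * N ! : ℤ) ≠ 0 by positivity) ?_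
  push_cast at hhalf
  linear_combination hhalf
end

section
/- Let n, r be integers with 0 ≤ 2r ≤ n. The {0,1}-matrix D of size C(n,r) × C(n,r), with rows and columns indexed by r-element subsets of {1,…,n}, where D_{I,J} = 1 if I ∩ J = ∅ and D_{I,J} = 0 otherwise, is invertible over ℚ. -/
open Finset

/-- Coefficient vector for the inverse of the disjointness matrix, defined by
downward-triangular recursion. -/
noncomputable def dmAux (n r : ℕ) : ℕ → ℚ
  | k =>
    ((if k = 0 then (1 : ℚ) else 0) -
      ∑ t ∈ (Finset.range k).attach,
        ((k.choose t.1) * ((n - r - k).choose (r - t.1)) : ℚ) * dmAux n r t.1) /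
    ((n - r - k).choose (r - k))
  decreasing_by exact Finset.mem_range.mp t.2

lemma dmAux_spec (n r : ℕ) (h : 2 * r ≤ n) (k : ℕ) (hk : k ≤ r) :
    ∑ t ∈ Finset.range (r + 1),
        ((k.choose t) * ((n - r - k).choose (r - t)) : ℚ) * dmAux n r t
      = if k = 0 then 1 else 0 := by
  have hpivot : ((n - r - k).choose (r - k) : ℚ) ≠ 0 := by
    have hle : r - k ≤ n - r - k := by omega
    exact_mod_cast (Nat.choose_pos hle).ne'
  have hsub : Finset.range (k + 1) ⊆ Finset.range (r + 1) :=
    Finset.range_subset_range.mpr (by omega)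
  have hz : ∀ t ∈ Finset.range (r + 1), t ∉ Finset.range (k + 1) →
      ((k.choose t) * ((n - r - k).choose (r - t)) : ℚ) * dmAux n r t = 0 := by
    intro t _ ht
    have hkt : k < t := by simpa using ht
    simp [Nat.choose_eq_zero_of_lt hkt]
  rw [← Finset.sum_subset hsub hz, Finset.sum_range_succ]
  rw [dmAux]
  rw [Finset.sum_attach (Finset.range k)
    (fun t => ((k.choose t) * ((n - r - k).choose (r - t)) : ℚ) * dmAux n r t)]
  rw [Nat.choose_self]
  push_cast
  rw [one_mul, mul_comm, div_mul_cancel₀ _ hpivot]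
  ring

lemma dm_card_filter {n : ℕ} (r : ℕ) (I K : Finset (Fin n)) (t : ℕ) (ht : t ≤ r) :
    ((Finset.powersetCard r Iᶜ).filter fun J => (J ∩ K).card = t).card
      = (K \ I).card.choose t * (Iᶜ \ K).card.choose (r - t) := by
  rw [← Finset.card_powersetCard, ← Finset.card_powersetCard, ← Finset.card_product]
  apply Finset.card_bij' (fun J _ => (J ∩ K, J \ K)) (fun p _ => p.1 ∪ p.2)
  · intro J hJ
    simp only [Finset.mem_filter, Finset.mem_powersetCard] at hJ
    obtain ⟨⟨hJI, hJcard⟩, hJt⟩ := hJ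
    simp only [Finset.mem_product, Finset.mem_powersetCard]
    refine ⟨⟨?_, hJt⟩, ?_, ?_⟩
    · intro x hx
      simp only [Finset.mem_inter] at hx
      simp only [Finset.mem_sdiff]
      exact ⟨hx.2, by simpa using hJI hx.1⟩
    · exact Finset.sdiff_subset_sdiff hJI le_rfl
    · have := Finset.card_inter_add_card_sdiff J K
      omega
  · intro p hp
    simp only [Finset.mem_product, Finset.mem_powersetCard] at hp
    obtain ⟨⟨hA, hAcard⟩, hB, hBcard⟩ := hp
    have hAI : p.1 ⊆ Iᶜ := fun x hx => by
      have := hA hx; simp only [Finset.mem_sdiff] at this; simpa using this.2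
    have hBI : p.2 ⊆ Iᶜ := fun x hx => (Finset.mem_sdiff.mp (hB hx)).1
    have hdisj : Disjoint p.1 p.2 := by
      refine Finset.disjoint_left.mpr fun x hx1 hx2 => ?_
      exact (Finset.mem_sdiff.mp (hB hx2)).2 ((Finset.mem_sdiff.mp (hA hx1)).1)
    simp only [Finset.mem_filter, Finset.mem_powersetCard]
    have hAK : p.1 ⊆ K := fun x hx => (Finset.mem_sdiff.mp (hA hx)).1
    have hBK : Disjoint p.2 K := Finset.disjoint_left.mpr fun x hx2 hxK =>
      (Finset.mem_sdiff.mp (hB hx2)).2 hxK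
    have hinter : (p.1 ∪ p.2) ∩ K = p.1 := by
      rw [Finset.union_inter_distrib_right, Finset.inter_eq_left.mpr hAK,
        Finset.disjoint_iff_inter_eq_empty.mp hBK, Finset.union_empty]
    refine ⟨⟨Finset.union_subset hAI hBI, ?_⟩, by rw [hinter, hAcard]⟩
    rw [Finset.card_union_of_disjoint hdisj, hAcard, hBcard]
    omega
  · intro J hJ
    simp only
    rw [Finset.union_comm, Finset.sdiff_union_inter]
  · intro p hp
    simp only [Finset.mem_product, Finset.mem_powersetCard] at hp
    obtain ⟨⟨hA, hAcard⟩, hB, hBcard⟩ := hp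
    have hAK : p.1 ⊆ K := fun x hx => (Finset.mem_sdiff.mp (hA hx)).1
    have hBK : Disjoint p.2 K := Finset.disjoint_left.mpr fun x hx2 hxK =>
      (Finset.mem_sdiff.mp (hB hx2)).2 hxK
    have hinter : (p.1 ∪ p.2) ∩ K = p.1 := by
      rw [Finset.union_inter_distrib_right, Finset.inter_eq_left.mpr hAK,
        Finset.disjoint_iff_inter_eq_empty.mp hBK, Finset.union_empty]
    have hsdiff : (p.1 ∪ p.2) \ K = p.2 := by
      rw [Finset.union_sdiff_distrib, Finset.sdiff_eq_empty_iff_subset.mpr hAK,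
        Finset.empty_union, Finset.sdiff_eq_self_of_disjoint hBK]
    exact Prod.ext hinter hsdiff

lemma dm_sum_powerset {n : ℕ} (r : ℕ) (I K : Finset (Fin n)) (f : ℕ → ℚ) :
    ∑ J ∈ Finset.powersetCard r Iᶜ, f ((J ∩ K).card)
      = ∑ t ∈ Finset.range (r + 1),
          (((K \ I).card.choose t) * ((Iᶜ \ K).card.choose (r - t)) : ℚ) * f t := by
  have hmaps : ∀ J ∈ Finset.powersetCard r Iᶜ, (J ∩ K).card ∈ Finset.range (r + 1) := by
    intro J hJ
    simp only [Finset.mem_powersetCard] at hJ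
    simp only [Finset.mem_range]
    have := Finset.card_le_card (Finset.inter_subset_left (s₁ := J) (s₂ := K))
    omega
  rw [← Finset.sum_fiberwise_of_maps_to hmaps fun J => f ((J ∩ K).card)]
  refine Finset.sum_congr rfl fun t htr => ?_
  have ht : t ≤ r := by simpa using Nat.lt_succ_iff.mp (Finset.mem_range.mp htr)
  calc ∑ J ∈ (Finset.powersetCard r Iᶜ).filter fun J => (J ∩ K).card = t,
        f ((J ∩ K).card)
      = ∑ J ∈ (Finset.powersetCard r Iᶜ).filter fun J => (J ∩ K).card = t, f t := by
        refine Finset.sum_congr rfl fun J hJ => ?_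
        rw [(Finset.mem_filter.mp hJ).2]
    _ = _ := by
        rw [Finset.sum_const, dm_card_filter r I K t ht, nsmul_eq_mul]
        push_cast
        ring

/-- The disjointness matrix on `r`-subsets of an `n`-set is invertible over `ℚ`
whenever `2r ≤ n`. -/
theorem disjointness_matrix_invertible (n r : ℕ) (h : 2 * r ≤ n) :
    IsUnit (Matrix.of fun I J : {s : Finset (Fin n) // s.card = r} =>
      if Disjoint I.1 J.1 then (1 : ℚ) else 0) := by
  classical
  set M : Matrix {s : Finset (Fin n) // s.card = r} {s : Finset (Fin n) // s.card = r} ℚ :=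
    Matrix.of fun J K => dmAux n r ((J.1 ∩ K.1).card) with hM
  have key : (Matrix.of fun I J : {s : Finset (Fin n) // s.card = r} =>
      if Disjoint I.1 J.1 then (1 : ℚ) else 0) * M = 1 := by
    ext I K
    rw [Matrix.mul_apply, Matrix.one_apply]
    simp only [hM, Matrix.of_apply]
    have h1 : ∀ x : Finset (Fin n),
        x ∈ Finset.powersetCard r (Finset.univ : Finset (Fin n)) ↔ x.card = r :=
      fun x => Finset.mem_powersetCard_univ
    rw [← Finset.sum_subtype _ h1
      (fun J => (if Disjoint I.1 J then (1 : ℚ) else 0) * dmAux n r ((J ∩ K.1).card))]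
    have h2 : ∑ J ∈ Finset.powersetCard r (Finset.univ : Finset (Fin n)),
        (if Disjoint I.1 J then (1 : ℚ) else 0) * dmAux n r ((J ∩ K.1).card)
        = ∑ J ∈ Finset.powersetCard r I.1ᶜ, dmAux n r ((J ∩ K.1).card) := by
      simp only [ite_mul, one_mul, zero_mul]
      rw [← Finset.sum_filter]
      congr 1
      ext J
      simp only [Finset.mem_filter, Finset.mem_powersetCard_univ, Finset.mem_powersetCard]
      constructor
      · rintro ⟨⟨-, hc⟩, hd⟩
        exact ⟨le_compl_iff_disjoint_left.mpr hd, hc⟩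
      · rintro ⟨hss, hc⟩
        exact ⟨⟨Finset.subset_univ J, hc⟩, le_compl_iff_disjoint_left.mp hss⟩
    rw [h2, dm_sum_powerset r I.1 K.1 (dmAux n r)]
    set s := (I.1 ∩ K.1).card with hs
    have hsr : s ≤ r := by
      have := Finset.card_le_card (Finset.inter_subset_left (s₁ := I.1) (s₂ := K.1))
      have := I.2
      omega
    have hKI : (K.1 \ I.1).card = r - s := by
      have h3 := Finset.card_sdiff_add_card_inter K.1 I.1
      have h4 : (K.1 ∩ I.1).card = s := by rw [Finset.inter_comm]
      have := K.2
      omega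
    have hunion : (I.1 ∪ K.1).card = 2 * r - s := by
      have h3 := Finset.card_union_add_card_inter I.1 K.1
      have := I.2; have := K.2
      omega
    have hc : (I.1ᶜ \ K.1).card = n - r - (r - s) := by
      have h5 : I.1ᶜ \ K.1 = (I.1 ∪ K.1)ᶜ := by
        rw [Finset.compl_union, sdiff_eq]
        rfl
      rw [h5, Finset.card_compl, Fintype.card_fin, hunion]
      omega
    rw [hKI, hc]
    rw [dmAux_spec n r h (r - s) (by omega)]
    have hiff : r - s = 0 ↔ I = K := by
      constructor
      · intro h0
        have hsr' : s = r := by omega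
        have hIK : I.1 ∩ K.1 = I.1 := by
          apply Finset.eq_of_subset_of_card_le Finset.inter_subset_left
          rw [I.2, ← hs, hsr']
        have hsub' : I.1 ⊆ K.1 := Finset.inter_eq_left.mp hIK
        have : I.1 = K.1 :=
          Finset.eq_of_subset_of_card_le hsub' (by rw [I.2, K.2])
        exact Subtype.ext this
      · intro hIK
        rw [hs, hIK, Finset.inter_self, K.2]
        omega
    simp only [hiff]
  have : Invertible (Matrix.of fun I J : {s : Finset (Fin n) // s.card = r} =>
      if Disjoint I.1 J.1 then (1 : ℚ) else 0) :=
    invertibleOfRightInverse _ _ key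
  exact isUnit_of_invertible _
end

section
/- Let r ≤ d ≤ n. The C(n,d-r) × C(n,r) {0,1}-matrix M, with rows indexed by (d-r)-subsets and columns indexed by r-subsets of {1,…,n}, where M_{I,J} = 1 if and only if I ∩ J = ∅, has full rank min(C(n,d-r), C(n,r)) over ℚ. -/
open Finset

lemma disj_count {n : ℕ} (b j : ℕ) (hj : j ≤ b) (I I' : Finset (Fin n)) :
    ((univ.powersetCard b).filter fun J => Disjoint I J ∧ (J ∩ I').card = j).card
      = ((I' \ I).card).choose j * (((I ∪ I')ᶜ).card).choose (b - j) := by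
  rw [← card_powersetCard, ← card_powersetCard, ← card_product]
  have hset : ((univ.powersetCard b).filter fun J => Disjoint I J ∧ (J ∩ I').card = j)
      = (((I' \ I).powersetCard j) ×ˢ (((I ∪ I')ᶜ).powersetCard (b - j))).image
          fun p => p.1 ∪ p.2 := by
    ext J
    simp only [mem_filter, mem_powersetCard, mem_image, mem_product, subset_univ, true_and,
      Prod.exists]
    constructor
    · rintro ⟨hb, hdisj, hcard⟩
      refine ⟨J ∩ I', J \ I', ⟨⟨?_, hcard⟩, ?_, ?_⟩, ?_⟩
      · intro x hx
        simp only [mem_inter] at hx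
        simp only [mem_sdiff, hx.2, true_and]
        exact fun hxI => (disjoint_left.mp hdisj hxI) hx.1
      · intro x hx
        simp only [mem_sdiff] at hx
        simp only [mem_compl, mem_union, not_or]
        exact ⟨fun hxI => (disjoint_left.mp hdisj hxI) hx.1, hx.2⟩
      · have := card_inter_add_card_sdiff J I'
        omega
      · rw [union_comm]; exact sdiff_union_inter J I'
    · rintro ⟨A, B, ⟨⟨hA, hAc⟩, hB, hBc⟩, rfl⟩
      have hABdisj : Disjoint A B := by
        refine disjoint_left.mpr fun x hxA hxB => ?_
        have h1 : x ∈ I' := (mem_sdiff.mp (hA hxA)).1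
        have h2 := mem_compl.mp (hB hxB)
        exact h2 (mem_union_right _ h1)
      refine ⟨?_, ?_, ?_⟩
      · rw [card_union_of_disjoint hABdisj]; omega
      · refine disjoint_left.mpr fun x hxI hxAB => ?_
        rcases mem_union.mp hxAB with h | h
        · exact (mem_sdiff.mp (hA h)).2 hxI
        · exact (mem_compl.mp (hB h)) (mem_union_left _ hxI)
      · have : (A ∪ B) ∩ I' = A := by
          ext x
          simp only [mem_inter, mem_union]
          constructor
          · rintro ⟨h1 | h1, h2⟩
            · exact h1
            · exact absurd (mem_union_right _ h2) (mem_compl.mp (hB h1))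
          · intro hx
            exact ⟨Or.inl hx, (mem_sdiff.mp (hA hx)).1⟩
        rw [this, hAc]
  rw [hset]
  apply card_image_of_injOn
  rintro ⟨A, B⟩ hp ⟨A', B'⟩ hq hpq
  obtain ⟨hp1, hp2⟩ := mem_product.mp hp
  obtain ⟨hq1, hq2⟩ := mem_product.mp hq
  have hp : (A ⊆ I' \ I ∧ A.card = j) ∧ (B ⊆ (I ∪ I')ᶜ ∧ B.card = b - j) :=
    ⟨mem_powersetCard.mp hp1, mem_powersetCard.mp hp2⟩
  have hq : (A' ⊆ I' \ I ∧ A'.card = j) ∧ (B' ⊆ (I ∪ I')ᶜ ∧ B'.card = b - j) :=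
    ⟨mem_powersetCard.mp hq1, mem_powersetCard.mp hq2⟩
  have key : ∀ (X Y : Finset (Fin n)), X ⊆ I' \ I → Y ⊆ (I ∪ I')ᶜ → (X ∪ Y) ∩ I' = X := by
    intro X Y hX hY
    ext x
    simp only [mem_inter, mem_union]
    constructor
    · rintro ⟨h1 | h1, h2⟩
      · exact h1
      · exact absurd (mem_union_right _ h2) (mem_compl.mp (hY h1))
    · intro hx
      exact ⟨Or.inl hx, (mem_sdiff.mp (hX hx)).1⟩
  have hA : A = A' := by
    have h1 := key A B hp.1.1 hp.2.1
    have h2 := key A' B' hq.1.1 hq.2.1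
    rw [← h1, ← h2, show A ∪ B = A' ∪ B' from hpq]
  have hB : B = B' := by
    have h1 : (A ∪ B) \ I' = B := by
      ext x
      simp only [mem_sdiff, mem_union]
      constructor
      · rintro ⟨h1 | h1, h2⟩
        · exact absurd (mem_sdiff.mp (hp.1.1 h1)).1 h2
        · exact h1
      · intro hx
        exact ⟨Or.inr hx, fun hxI' => (mem_compl.mp (hp.2.1 hx)) (mem_union_right _ hxI')⟩
    have h2 : (A' ∪ B') \ I' = B' := by
      ext x
      simp only [mem_sdiff, mem_union]
      constructor
      · rintro ⟨h1 | h1, h2⟩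
        · exact absurd (mem_sdiff.mp (hq.1.1 h1)).1 h2
        · exact h1
      · intro hx
        exact ⟨Or.inr hx, fun hxI' => (mem_compl.mp (hq.2.1 hx)) (mem_union_right _ hxI')⟩
    rw [← h1, ← h2, show A ∪ B = A' ∪ B' from hpq]
  simp [hA, hB]

lemma disj_rank (n a b : ℕ) (hab : a ≤ b) (hn : a + b ≤ n) :
    Matrix.rank (Matrix.of fun (I : {s : Finset (Fin n) // s.card = a})
        (J : {s : Finset (Fin n) // s.card = b}) =>
      if Disjoint I.1 J.1 then (1 : ℚ) else 0) = n.choose a := by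
  classical
  set α := {s : Finset (Fin n) // s.card = a} with hα
  set β := {s : Finset (Fin n) // s.card = b} with hβ
  set M : Matrix α β ℚ := Matrix.of fun I J => if Disjoint I.1 J.1 then (1:ℚ) else 0 with hM
  set T : Matrix (Fin (a+1)) (Fin (a+1)) ℚ := Matrix.of fun i j =>
    (((a - (i:ℕ)).choose (j:ℕ) * (n - (2*a - (i:ℕ))).choose (b - (j:ℕ)) : ℕ) : ℚ) with hT
  have hrev : ∀ i : Fin (a+1), ((Fin.revPerm i : Fin (a+1)) : ℕ) = a - (i:ℕ) := by
    intro i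
    simp [Fin.revPerm, Fin.val_rev]
  have hUdiag : ∀ i : Fin (a+1), T (Fin.revPerm i) i ≠ 0 := by
    intro i
    have hi : (i:ℕ) ≤ a := Nat.lt_succ_iff.mp i.2
    rw [hT]
    simp only [Matrix.of_apply, hrev]
    have h1 : a - (a - (i:ℕ)) = (i:ℕ) := by omega
    have h2 : 2*a - (a - (i:ℕ)) = a + (i:ℕ) := by omega
    rw [h1, h2, Nat.choose_self]
    have : 0 < (n - (a + (i:ℕ))).choose (b - (i:ℕ)) := Nat.choose_pos (by omega)
    positivity
  have hTdet : T.det ≠ 0 := by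
    have htri : (T.submatrix (⇑Fin.revPerm) id).BlockTriangular OrderDual.toDual := by
      intro i j hij
      have hij' : (i:ℕ) < (j:ℕ) := hij
      have hi : (i:ℕ) ≤ a := Nat.lt_succ_iff.mp i.2
      show T (Fin.revPerm i) j = 0
      rw [hT]
      simp only [Matrix.of_apply, hrev]
      have h1 : a - (a - (i:ℕ)) = (i:ℕ) := by omega
      rw [h1, Nat.choose_eq_zero_of_lt hij']
      simp
    have hU : (T.submatrix (⇑Fin.revPerm) id).det = ∏ i : Fin (a+1), T (Fin.revPerm i) i := by
      rw [Matrix.det_of_lowerTriangular _ htri]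
      rfl
    have hperm := Matrix.det_permute (Fin.revPerm) T
    intro h0
    rw [h0, mul_zero] at hperm
    rw [hperm] at hU
    exact (Finset.prod_ne_zero_iff.mpr fun i _ => hUdiag i) hU.symm
  set e : Fin (a+1) → ℚ := fun i => if (i:ℕ) = a then 1 else 0 with he
  set f : Fin (a+1) → ℚ := T⁻¹.mulVec e with hfdef
  have hf : T.mulVec f = e := by
    rw [hfdef, Matrix.mulVec_mulVec, Matrix.mul_nonsing_inv _ (isUnit_iff_ne_zero.mpr hTdet),
      Matrix.one_mulVec]
  have hlt : ∀ (I' : α) (J : β), (J.1 ∩ I'.1).card < a + 1 := fun I' J =>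
    Nat.lt_succ_of_le (le_trans (card_le_card inter_subset_right) I'.2.le)
  set g : α → β → Fin (a+1) := fun I' J => ⟨(J.1 ∩ I'.1).card, hlt I' J⟩ with hg
  set N : Matrix β α ℚ := Matrix.of fun J I' => f (g I' J) with hN
  have hMN : M * N = 1 := by
    ext I I'
    rw [Matrix.mul_apply, Matrix.one_apply]
    have hia : (I.1 ∩ I'.1).card ≤ a := le_trans (card_le_card inter_subset_left) I.2.le
    have hgroup : ∑ J : β, M I J * N J I'
        = ∑ j : Fin (a+1), ∑ J ∈ univ.filter (fun J : β => g I' J = j), M I J * N J I' :=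
      (Finset.sum_fiberwise univ (g I') (fun J => M I J * N J I')).symm
    rw [hgroup]
    have hinner : ∀ j : Fin (a+1),
        ∑ J ∈ univ.filter (fun J : β => g I' J = j), M I J * N J I'
          = (((univ.filter (fun J : β => g I' J = j)).filter
              (fun J : β => Disjoint I.1 J.1)).card : ℚ) * f j := by
      intro j
      have hterm : ∀ J ∈ univ.filter (fun J : β => g I' J = j),
          M I J * N J I' = (if Disjoint I.1 J.1 then (1:ℚ) else 0) * f j := by
        intro J hJ
        have hJ' := (Finset.mem_filter.mp hJ).2
        rw [hN, hM]
        simp only [Matrix.of_apply, hJ']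
      rw [Finset.sum_congr rfl hterm, ← Finset.sum_mul, Finset.sum_boole]
    rw [Finset.sum_congr rfl (fun j _ => hinner j)]
    have hcard : ∀ j : Fin (a+1),
        ((univ.filter (fun J : β => g I' J = j)).filter (fun J : β => Disjoint I.1 J.1)).card
          = ((univ.powersetCard b).filter
              fun J => Disjoint I.1 J ∧ (J ∩ I'.1).card = (j:ℕ)).card := by
      intro j
      apply Finset.card_bij (fun (J : β) _ => J.1)
      · intro J hJ
        simp only [Finset.mem_filter, Finset.mem_univ, true_and] at hJ
        simp only [Finset.mem_filter, Finset.mem_powersetCard, Finset.subset_univ, true_and]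
        exact ⟨J.2, hJ.2, congrArg Fin.val hJ.1⟩
      · intro J _ J' _ h
        exact Subtype.ext h
      · intro J hJ
        simp only [Finset.mem_filter, Finset.mem_powersetCard, Finset.subset_univ, true_and] at hJ
        refine ⟨⟨J, hJ.1⟩, ?_, rfl⟩
        simp only [Finset.mem_filter, Finset.mem_univ, true_and]
        exact ⟨Fin.ext hJ.2.2, hJ.2.1⟩
    have hfinal : ∀ j : Fin (a+1),
        (((univ.filter (fun J : β => g I' J = j)).filter
            (fun J : β => Disjoint I.1 J.1)).card : ℚ) * f j
          = T ⟨(I.1 ∩ I'.1).card, Nat.lt_succ_of_le hia⟩ j * f j := by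
      intro j
      congr 1
      rw [hcard j, disj_count b (j:ℕ) (le_trans (Nat.lt_succ_iff.mp j.2) hab) I.1 I'.1]
      have h5 : (I'.1 \ I.1).card = a - (I.1 ∩ I'.1).card := by
        have := card_sdiff_add_card_inter I'.1 I.1
        rw [inter_comm I'.1 I.1] at this
        have h2 := I'.2
        omega
      have h6 : ((I.1 ∪ I'.1)ᶜ).card = n - (2*a - (I.1 ∩ I'.1).card) := by
        rw [card_compl, Fintype.card_fin]
        have := card_union_add_card_inter I.1 I'.1
        have h1 := I.2
        have h2 := I'.2
        omega
      rw [h5, h6, hT]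
      simp
    rw [Finset.sum_congr rfl (fun j _ => hfinal j)]
    have hmv : ∑ j : Fin (a+1), T ⟨(I.1 ∩ I'.1).card, Nat.lt_succ_of_le hia⟩ j * f j
        = T.mulVec f ⟨(I.1 ∩ I'.1).card, Nat.lt_succ_of_le hia⟩ := by
      simp [Matrix.mulVec, dotProduct]
    rw [hmv, hf, he]
    have hiff : (I.1 ∩ I'.1).card = a ↔ I = I' := by
      constructor
      · intro h
        have h1 : I.1 ∩ I'.1 = I.1 :=
          Finset.eq_of_subset_of_card_le inter_subset_left (by rw [h, I.2])
        have h2 : I.1 ⊆ I'.1 := by rw [← h1]; exact inter_subset_right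
        exact Subtype.ext (Finset.eq_of_subset_of_card_le h2 (by rw [I.2, I'.2]))
      · intro h
        rw [h, inter_self]
        exact I'.2
    by_cases h : I = I'
    · simp [h, inter_self, I'.2]
    · have : ¬ (I.1 ∩ I'.1).card = a := fun hc => h (hiff.mp hc)
      simp [h, this]
  have hcardα : Fintype.card α = n.choose a := by
    have h := Fintype.card_finset_len (α := Fin n) a
    rw [Fintype.card_fin] at h
    exact h
  have h1 : M.rank ≤ Fintype.card α := Matrix.rank_le_card_height M
  have h2 : Fintype.card α ≤ M.rank := by
    calc Fintype.card α = (1 : Matrix α α ℚ).rank := (Matrix.rank_one).symm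
    _ = (M * N).rank := by rw [hMN]
    _ ≤ M.rank := Matrix.rank_mul_le_left M N
  rw [← hcardα]
  exact le_antisymm h1 h2

/-- The reduced `r`-th catalecticant of `σ_{d,n}`: the `C(n,d-r) × C(n,r)` disjointness
matrix between `(d-r)`-subsets and `r`-subsets of `[n]` has full rank over `ℚ`. -/
theorem reduced_catalecticant_full_rank (n d r : ℕ) (hr : r ≤ d) (hd : d ≤ n) :
    Matrix.rank (Matrix.of fun (I : {s : Finset (Fin n) // s.card = d - r})
        (J : {s : Finset (Fin n) // s.card = r}) =>
      if Disjoint I.1 J.1 then (1 : ℚ) else 0) =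
      min (n.choose (d - r)) (n.choose r) := by
  classical
  have hcard : ∀ k : ℕ, Fintype.card {s : Finset (Fin n) // s.card = k} = n.choose k := by
    intro k
    have h := Fintype.card_finset_len (α := Fin n) k
    rw [Fintype.card_fin] at h
    exact h
  by_cases hcase : d - r ≤ r
  · have hn : (d - r) + r ≤ n := by omega
    have h1 := disj_rank n (d - r) r hcase hn
    have h2 := le_trans (Matrix.rank_le_card_width (Matrix.of fun
        (I : {s : Finset (Fin n) // s.card = d - r})
        (J : {s : Finset (Fin n) // s.card = r}) =>
      if Disjoint I.1 J.1 then (1 : ℚ) else 0)) (le_of_eq (hcard r))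
    rw [h1] at h2 ⊢
    exact (min_eq_left h2).symm
  · have hba : r ≤ d - r := by omega
    have hn : r + (d - r) ≤ n := by omega
    have h1 := disj_rank n r (d - r) hba hn
    have hMT : (Matrix.of fun (I : {s : Finset (Fin n) // s.card = d - r})
        (J : {s : Finset (Fin n) // s.card = r}) =>
          if Disjoint I.1 J.1 then (1 : ℚ) else 0)
        = (Matrix.of fun (J : {s : Finset (Fin n) // s.card = r})
            (I : {s : Finset (Fin n) // s.card = d - r}) =>
          if Disjoint J.1 I.1 then (1 : ℚ) else 0).transpose := by
      ext I J
      simp only [Matrix.transpose_apply, Matrix.of_apply]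
      exact if_congr disjoint_comm rfl rfl
    have h2 := le_trans (Matrix.rank_le_card_width (Matrix.of fun
        (J : {s : Finset (Fin n) // s.card = r})
        (I : {s : Finset (Fin n) // s.card = d - r}) =>
      if Disjoint J.1 I.1 then (1 : ℚ) else 0)) (le_of_eq (hcard (d - r)))
    rw [h1] at h2
    rw [hMT, Matrix.rank_transpose, h1]
    exact (min_eq_right h2).symm
end

section
/- Let r ≤ d ≤ n with r ≤ d - r, and let M be the C(n,d-r) × C(n,r) disjointness matrix (M_{I,J} = 1 iff the (d-r)-set I and the r-set J are disjoint). For each r-subset K of {1,…,n}, the sum of the rows of M indexed by (d-r)-sets J containing K equals a nonzero scalar multiple of the row vector v_K of the disjointness matrix D_r^n (where (v_K)_J = 1 iff K ∩ J = ∅ for r-sets J). -/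
/-!
If `K` and `J` are disjoint `r`-sets, the `(d-r)`-sets containing `K` and avoiding `J` are `K`
together with a `(d-2r)`-subset of the complement of `K ∪ J`, so there are `C(n-2r, d-2r) ≠ 0`
of them, independently of `J`. If `K` meets `J`, no superset of `K` avoids `J`.
-/

open Finset

variable {α : Type*} [Fintype α]

theorem sum_subtype_card_eq_sum_powersetCard {M : Type*} [AddCommMonoid M] (m : ℕ)
    (f : Finset α → M) :
    ∑ s : {s : Finset α // #s = m}, f s.1 = ∑ s ∈ powersetCard m univ, f s :=
  (sum_subtype _ (fun _ => mem_powersetCard_univ) f).symm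

variable [DecidableEq α]

theorem filter_disjoint_powersetCard_univ (m : ℕ) (J : Finset α) :
    (powersetCard m univ).filter (Disjoint · J) = powersetCard m Jᶜ := by
  ext s
  simp only [mem_filter, mem_powersetCard, subset_univ, true_and, subset_compl_iff_disjoint_right,
    and_comm]

theorem card_filter_subset_disjoint_powersetCard_univ {K J : Finset α} (hKJ : Disjoint K J)
    {m : ℕ} (hKm : #K ≤ m) :
    #{s ∈ powersetCard m univ | K ⊆ s ∧ Disjoint s J} =
      (Fintype.card α - #K - #J).choose (m - #K) := by
  rw [← filter_filter, filter_comm, filter_disjoint_powersetCard_univ,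
    card_filter_powersetCard_subset _ _ _ (subset_compl_iff_disjoint_right.2 hKJ) hKm,
    card_compl, Nat.sub_right_comm]

theorem sum_filter_subset_ite_disjoint {R : Type*} [AddCommMonoidWithOne R] {K J : Finset α}
    (hKJ : Disjoint K J) {m : ℕ} (hKm : #K ≤ m) :
    ∑ I ∈ (univ : Finset {s : Finset α // #s = m}).filter (fun I => K ⊆ I.1),
        (if Disjoint I.1 J then (1 : R) else 0) =
      ((Fintype.card α - #K - #J).choose (m - #K) : R) := by
  rw [sum_filter, sum_subtype_card_eq_sum_powersetCard m
    fun s => if K ⊆ s then if Disjoint s J then 1 else 0 else 0]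
  simp only [← ite_and, sum_boole, card_filter_subset_disjoint_powersetCard_univ hKJ hKm]

theorem row_sum_disjointness_general (n d r : ℕ) (hr : r ≤ d - r) (hd : d ≤ n)
    (K : {s : Finset (Fin n) // s.card = r}) :
    ∃ c : ℚ, c ≠ 0 ∧
      ∀ J : {s : Finset (Fin n) // s.card = r},
        (∑ I ∈ (Finset.univ : Finset {s : Finset (Fin n) // s.card = d - r}).filter
            (fun I => K.1 ⊆ I.1),
          if Disjoint I.1 J.1 then (1 : ℚ) else 0) =
        c * (if Disjoint K.1 J.1 then (1 : ℚ) else 0) := by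
  refine ⟨(n - r - r).choose (d - r - r), by exact_mod_cast (Nat.choose_pos (by omega)).ne', ?_⟩
  rintro ⟨J, hJ⟩
  by_cases hKJ : Disjoint K.1 J
  · rw [sum_filter_subset_ite_disjoint hKJ (K.2.trans_le hr), if_pos hKJ, mul_one, K.2, hJ,
      Fintype.card_fin]
  · rw [if_neg hKJ, mul_zero]
    exact sum_eq_zero fun I hI => if_neg fun hIJ => hKJ (hIJ.mono_left (mem_filter.1 hI).2)

/-- For `r ≤ d - r` and `d ≤ n`, summing the rows of the `(d-r) × r` disjointness matrix `M`
indexed by the `(d-r)`-sets containing a fixed `r`-set `K` yields a nonzero scalar multiple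
of the row `v_K` of the square disjointness matrix `D_r^n`. -/
theorem row_sum_disjointness (n d r : ℕ) (hr : r ≤ d - r) (hrd : r ≤ d) (hd : d ≤ n)
    (K : {s : Finset (Fin n) // s.card = r}) :
    ∃ c : ℚ, c ≠ 0 ∧
      ∀ J : {s : Finset (Fin n) // s.card = r},
        (∑ I ∈ (Finset.univ : Finset {s : Finset (Fin n) // s.card = d - r}).filter
            (fun I => K.1 ⊆ I.1),
          if Disjoint I.1 J.1 then (1 : ℚ) else 0) =
        c * (if Disjoint K.1 J.1 then (1 : ℚ) else 0) :=
  row_sum_disjointness_general n d r hr hd K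
end

section
/- Let d ≤ n and let σ_{d,n} ∈ ℂ[x_1,…,x_n] be the elementary symmetric polynomial of degree d. For each r with 0 ≤ r ≤ d, the Hilbert function of S/(σ_{d,n})^⊥ at r equals C(n,r) if r ≤ ⌊d/2⌋ and C(n,d-r) if r > ⌊d/2⌋, where (σ_{d,n})^⊥ is the apolar ideal in the ring S of constant-coefficient differential operators. -/
open MvPolynomial Finset

/-- Differentiation of `F` by the monomial differential operator
`∂^{m} = ∏_i (∂/∂x_i)^{m i}`. -/
noncomputable def derivMon {n : ℕ} (m : Fin n →₀ ℕ) (F : MvPolynomial (Fin n) ℂ) :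
    MvPolynomial (Fin n) ℂ :=
  (List.finRange n).foldl (fun G i => (⇑(pderiv i))^[m i] G) F

/-!
A derivative `∂^m σ_{d,n}` with some `m i ≥ 2` vanishes, and for an `r`-set `T` the derivative
`∂^T σ_{d,n}` is the sum of the squarefree monomials `x^U` over the `(d-r)`-sets `U` disjoint
from `T`. Since squarefree monomials are linearly independent, the Hilbert function in degree `r`
is the rank of the disjointness matrix of `r`-sets against `(d-r)`-sets. Complementing the columns
turns it into the inclusion matrix of `r`-sets in `(n-d+r)`-sets, which has full rank
`C(n, min(r, d-r))` by Gottlieb's theorem. That theorem follows from the `sl₂` relation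
`[down, up] = n - 2k` between the up and down operators on functions supported on `k`-sets, which
makes `up^m` injective there whenever `2k + m ≤ n`.
-/

namespace SubsetLattice

variable {α : Type*} [DecidableEq α]

section CommRing

variable {K : Type*} [CommRing K]

def OnLevel (k : ℕ) (c : Finset α → K) : Prop := ∀ S : Finset α, #S ≠ k → c S = 0

noncomputable def up : Module.End K (Finset α → K) where
  toFun c S := ∑ i ∈ S, c (S.erase i)
  map_add' c d := by funext S; simp [sum_add_distrib]
  map_smul' a c := by funext S; simp [mul_sum]

theorem up_apply (c : Finset α → K) (S : Finset α) : up c S = ∑ i ∈ S, c (S.erase i) := rfl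

theorem onLevel_up {k : ℕ} {c : Finset α → K} (hc : OnLevel k c) : OnLevel (k + 1) (up c) := by
  intro S hS
  refine sum_eq_zero fun i hi => hc _ ?_
  have := card_pos.mpr ⟨i, hi⟩
  rw [card_erase_of_mem hi]
  omega

theorem onLevel_up_pow {k : ℕ} {c : Finset α → K} (hc : OnLevel k c) (m : ℕ) :
    OnLevel (k + m) ((up ^ m) c) := by
  induction m with
  | zero => simpa using hc
  | succ m ih => simpa [pow_succ', ← add_assoc] using onLevel_up ih

/-- Each `a`-subset `T ⊆ B` is reached from `B` by `j!` chains of deletions. -/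
theorem up_pow_apply {a : ℕ} (c : Finset α → K) (j : ℕ) (B : Finset α)
    (hB : #B = a + j) : (up ^ j) c B = j.factorial * ∑ T ∈ powersetCard a B, c T := by
  induction j generalizing B with
  | zero => simp [show a = #B by omega]
  | succ j ih =>
    have hchains : ∑ i ∈ B, ∑ T ∈ powersetCard a (B.erase i), c T
        = ∑ T ∈ powersetCard a B, ∑ _i ∈ B \ T, c T :=
      sum_comm' fun i T => by
        simp only [mem_powersetCard, mem_sdiff, subset_erase]
        tauto
    have hcount : ∀ T ∈ powersetCard a B, ∑ _i ∈ B \ T, c T = (j + 1 : K) * c T := by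
      intro T hT
      rw [mem_powersetCard] at hT
      rw [sum_const, card_sdiff_of_subset hT.1, hB, hT.2, nsmul_eq_mul,
        show a + (j + 1) - a = j + 1 by omega]
      push_cast
      ring
    rw [pow_succ', Module.End.mul_apply, up_apply,
      sum_congr rfl fun i hi => ih _ (by rw [card_erase_of_mem hi]; omega), ← mul_sum, hchains,
      sum_congr rfl hcount, ← mul_sum, Nat.factorial_succ]
    push_cast
    ring

variable [Fintype α]

noncomputable def down : Module.End K (Finset α → K) where
  toFun c S := ∑ i ∈ Sᶜ, c (insert i S)
  map_add' c d := by funext S; simp [sum_add_distrib]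
  map_smul' a c := by funext S; simp [mul_sum]

theorem down_apply (c : Finset α → K) (S : Finset α) : down c S = ∑ i ∈ Sᶜ, c (insert i S) := rfl

theorem onLevel_down {k : ℕ} {c : Finset α → K} (hc : OnLevel (k + 1) c) :
    OnLevel k (down c) := by
  intro S hS
  refine sum_eq_zero fun i hi => hc _ ?_
  rw [card_insert_of_notMem (mem_compl.mp hi)]
  omega

theorem down_eq_zero_of_onLevel_zero {c : Finset α → K} (hc : OnLevel 0 c) : down c = 0 := by
  funext S
  exact sum_eq_zero fun i hi => hc _ (by simp [card_insert_of_notMem (mem_compl.mp hi)])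

/-- Both sides sum `c (S + i - j)` over `i ∉ S`, `j ∈ S`, plus the terms with `i = j`:
`n - #S` of them on the left and `#S` on the right. -/
theorem down_up_apply (c : Finset α → K) (S : Finset α) :
    down (up c) S = up (down c) S + ((Fintype.card α : K) - 2 * #S) * c S := by
  have hdown_up : ∀ i ∈ Sᶜ, up c (insert i S) = c S + ∑ j ∈ S, c (insert i (S.erase j)) := by
    intro i hi
    have hiS : i ∉ S := mem_compl.mp hi
    rw [up_apply, sum_insert hiS, erase_insert hiS]
    congr 1
    refine sum_congr rfl fun j hj => ?_
    rw [erase_insert_of_ne (ne_of_mem_of_not_mem hj hiS).symm]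
  have hup_down : ∀ j ∈ S, down c (S.erase j) = c S + ∑ i ∈ Sᶜ, c (insert i (S.erase j)) := by
    intro j hj
    rw [down_apply, compl_erase, sum_insert (by simp [hj]), insert_erase hj]
  rw [down_apply, up_apply, sum_congr rfl hdown_up, sum_congr rfl hup_down, sum_add_distrib,
    sum_add_distrib, sum_comm (s := S), sum_const, sum_const, card_compl, nsmul_eq_mul,
    nsmul_eq_mul, Nat.cast_sub (card_le_univ S)]
  ring

theorem down_up_of_onLevel {k : ℕ} {c : Finset α → K} (hc : OnLevel k c) :
    down (up c) = up (down c) + ((Fintype.card α : K) - 2 * k) • c := by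
  funext S
  rw [down_up_apply, Pi.add_apply, Pi.smul_apply, smul_eq_mul]
  by_cases hS : #S = k
  · rw [hS]
  · rw [hc S hS, mul_zero, mul_zero]

theorem down_up_pow_of_onLevel {k : ℕ} {c : Finset α → K} (hc : OnLevel k c) (m : ℕ) :
    down ((up ^ (m + 1)) c) = (up ^ (m + 1)) (down c)
      + (((m : K) + 1) * ((Fintype.card α : K) - 2 * k - m)) • (up ^ m) c := by
  induction m generalizing k c with
  | zero => simpa using down_up_of_onLevel hc
  | succ m ih =>
    rw [pow_succ, Module.End.mul_apply, ih (onLevel_up hc), down_up_of_onLevel hc, map_add,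
      map_smul, ← Module.End.mul_apply, ← pow_succ, ← Module.End.mul_apply (up ^ m), ← pow_succ,
      add_assoc, ← add_smul]
    congr 2
    push_cast
    ring

end CommRing

variable [Fintype α] {K : Type*} [Field K] [CharZero K]

/-- If `up^(m+1) c = 0`, the `sl₂` relation at `m + 1` and induction on `k` give `down c = 0`;
the relation at `m` then gives `up^m c = 0`, as `n - 2k - m ≠ 0`. -/
theorem eq_zero_of_up_pow_eq_zero {k m : ℕ} {c : Finset α → K} (hc : OnLevel k c)
    (hkm : 2 * k + m ≤ Fintype.card α) (h : (up ^ m) c = 0) : c = 0 := by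
  induction k using Nat.strong_induction_on generalizing m c with
  | _ k ihk =>
  induction m generalizing c with
  | zero => simpa using h
  | succ m ihm =>
    have hdown : down c = 0 := by
      obtain _ | k := k
      · exact down_eq_zero_of_onLevel_zero hc
      · have hup : (up ^ (m + 2)) (down c) = 0 := by
          simpa [pow_succ' up (m + 1), h] using (down_up_pow_of_onLevel hc (m + 1)).symm
        exact ihk k k.lt_succ_self (onLevel_down hc) (by omega) hup
    have hcoeff : ((m : K) + 1) * ((Fintype.card α : K) - 2 * k - m) ≠ 0 := by
      refine mul_ne_zero (Nat.cast_add_one_ne_zero m) ?_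
      rw [sub_sub, sub_ne_zero]
      exact_mod_cast (by omega : Fintype.card α ≠ 2 * k + m)
    have hrel := down_up_pow_of_onLevel hc m
    rw [h, hdown, map_zero, map_zero, zero_add, eq_comm, smul_eq_zero] at hrel
    exact ihm hc (by omega) (hrel.resolve_left hcoeff)

/-- Gottlieb's theorem: the inclusion matrix of `a`-sets in `k`-sets has full row rank
when `a ≤ k ≤ n - a`. -/
theorem eq_zero_of_sum_powersetCard_eq_zero {a k : ℕ} {c : Finset α → K} (hc : OnLevel a c)
    (hak : a ≤ k) (hk : a + k ≤ Fintype.card α)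
    (h : ∀ B : Finset α, #B = k → ∑ T ∈ powersetCard a B, c T = 0) : c = 0 := by
  refine eq_zero_of_up_pow_eq_zero hc (m := k - a) (by omega) (funext fun B => ?_)
  by_cases hB : #B = a + (k - a)
  · rw [up_pow_apply c _ B hB, h B (by omega), mul_zero, Pi.zero_apply]
  · exact onLevel_up_pow hc _ B hB

end SubsetLattice

open SubsetLattice

section Disjointness

variable {α : Type*} [DecidableEq α] (K : Type*)

def disjointnessMatrix [Zero K] [One K] (a b : ℕ) : Matrix {T : Finset α // #T = a} {U : Finset α // #U = b} K :=
  Matrix.of fun T U => if Disjoint T.1 U.1 then 1 else 0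

theorem disjointnessMatrix_transpose [Zero K] [One K] (a b : ℕ) :
    (disjointnessMatrix (α := α) K a b).transpose = disjointnessMatrix K b a := by
  ext U T
  simp only [disjointnessMatrix, Matrix.transpose_apply, Matrix.of_apply, disjoint_comm]

variable [Fintype α] [Field K] [CharZero K]

/-- A row relation `∑_T g_T [T ∩ U = ∅] = 0` says that `∑_{T ⊆ Uᶜ} g_T = 0` for all `U`, so
Gottlieb's theorem applies with `k = n - b`. -/
theorem linearIndependent_disjointnessMatrix {a b : ℕ} (hab : a ≤ b)
    (hn : a + b ≤ Fintype.card α) :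
    LinearIndependent K (disjointnessMatrix (α := α) K a b).row := by
  rw [Fintype.linearIndependent_iff]
  intro g hg
  set c : Finset α → K := fun T => if h : #T = a then g ⟨T, h⟩ else 0 with hc_def
  have hc : OnLevel a c := fun T hT => dif_neg hT
  have hsum : ∀ B : Finset α, #B = Fintype.card α - b → ∑ T ∈ powersetCard a B, c T = 0 := by
    intro B hB
    have hU : #Bᶜ = b := by rw [card_compl]; omega
    have hrow := congrFun hg ⟨Bᶜ, hU⟩
    simp only [Finset.sum_apply, Pi.smul_apply, Pi.zero_apply, disjointnessMatrix, Matrix.row,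
      Matrix.of_apply, smul_eq_mul, mul_ite, mul_one, mul_zero, disjoint_compl_right_iff] at hrow
    rw [← hrow, ← sum_filter]
    have hset : powersetCard a B = (univ.filter fun T : {T : Finset α // #T = a} => T.1 ⊆ B).map
        (Function.Embedding.subtype _) := by
      ext T
      simp [and_comm]
    rw [hset, sum_map]
    exact sum_congr rfl fun T _ => dif_pos T.2
  have hc0 := eq_zero_of_sum_powersetCard_eq_zero hc (by omega) (by omega) hsum
  intro T
  simpa [hc_def, T.2] using congrFun hc0 T.1

theorem rank_disjointnessMatrix {a b : ℕ} (hn : a + b ≤ Fintype.card α) :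
    (disjointnessMatrix (α := α) K a b).rank = (Fintype.card α).choose (min a b) := by
  rcases le_total a b with hab | hba
  · rw [(linearIndependent_disjointnessMatrix K hab hn).rank_matrix, Fintype.card_finset_len,
      min_eq_left hab]
  · rw [← Matrix.rank_transpose, disjointnessMatrix_transpose,
      (linearIndependent_disjointnessMatrix K hba (by omega)).rank_matrix, Fintype.card_finset_len,
      min_eq_right hba]

end Disjointness

theorem finrank_span_range_sum_smul {K M ι κ : Type*} [Field K] [AddCommGroup M] [Module K M]
    [Fintype ι] [Fintype κ] {v : ι → M} (hv : LinearIndependent K v) (A : Matrix κ ι K) :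
    Module.finrank K (Submodule.span K (Set.range fun k => ∑ i, A k i • v i)) = A.rank := by
  have hrange : (Set.range fun k => ∑ i, A k i • v i) =
      Fintype.linearCombination K v '' Set.range A.row := by
    rw [← Set.range_comp]
    rfl
  have hinj := linearIndependent_iff_injective_fintypeLinearCombination.mp hv
  rw [hrange, Submodule.span_image, A.rank_eq_finrank_span_row,
    ← (Submodule.equivMapOfInjective _ hinj _).finrank_eq]

section IteratedPartialDerivatives

variable {σ R : Type*} [CommSemiring R]

theorem iterate_pderiv_monomial (i : σ) (k : ℕ) (u : σ →₀ ℕ) (a : R) :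
    (⇑(pderiv i))^[k] (monomial u a) =
      monomial (u - Finsupp.single i k) (a * (u i).descFactorial k) := by
  induction k with
  | zero => simp
  | succ k ih =>
    rw [Function.iterate_succ_apply', ih, pderiv_monomial, tsub_tsub, ← Finsupp.single_add,
      Finsupp.tsub_apply, Finsupp.single_eq_same, Nat.descFactorial_succ, mul_assoc, Nat.cast_mul,
      mul_comm ((u i - k : ℕ) : R)]

theorem foldl_iterate_pderiv_monomial (m : σ →₀ ℕ) {L : List σ} (hL : L.Nodup) (u : σ →₀ ℕ)
    (a : R) :
    L.foldl (fun G i => (⇑(pderiv i))^[m i] G) (monomial u a) =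
      monomial (u - (L.map fun i => Finsupp.single i (m i)).sum)
        (a * (L.map fun i => ((u i).descFactorial (m i) : R)).prod) := by
  induction L generalizing u a with
  | nil => simp
  | cons i L ih =>
    obtain ⟨hiL, hL⟩ := List.nodup_cons.mp hL
    have hprod : (L.map fun j => (((u - Finsupp.single i (m i)) j).descFactorial (m j) : R)) =
        L.map fun j => ((u j).descFactorial (m j) : R) := List.map_congr_left fun j hj => by
      rw [Finsupp.tsub_apply, Finsupp.single_eq_of_ne (ne_of_mem_of_not_mem hj hiL), tsub_zero]
    rw [List.foldl_cons, iterate_pderiv_monomial, ih hL, hprod]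
    simp only [List.map_cons, List.sum_cons, List.prod_cons, tsub_tsub, mul_assoc]

end IteratedPartialDerivatives

section IndicatorExp

variable {σ : Type*} [DecidableEq σ]

/-- The exponent of the squarefree monomial `x^S = ∏_{i ∈ S} x_i`. -/
noncomputable def indicatorExp (S : Finset σ) : σ →₀ ℕ := ∑ i ∈ S, Finsupp.single i 1

theorem indicatorExp_apply (S : Finset σ) (i : σ) : indicatorExp S i = if i ∈ S then 1 else 0 := by
  simp [indicatorExp, Finsupp.finsetSum_apply, Finsupp.single_apply]

theorem indicatorExp_apply_le_one (S : Finset σ) (i : σ) : indicatorExp S i ≤ 1 := by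
  rw [indicatorExp_apply]
  split_ifs <;> simp

theorem indicatorExp_injective : Function.Injective (indicatorExp (σ := σ)) := by
  intro S T h
  ext i
  have := DFunLike.congr_fun h i
  simp only [indicatorExp_apply] at this
  split_ifs at this <;> simp_all

theorem indicatorExp_le_indicatorExp_iff {S T : Finset σ} :
    indicatorExp T ≤ indicatorExp S ↔ T ⊆ S := by
  simp only [Finsupp.le_def, indicatorExp_apply]
  refine ⟨fun h i hi => ?_, fun h i => ?_⟩
  · have := h i
    split_ifs at this <;> simp_all
  · by_cases hT : i ∈ T
    · simp [hT, h hT]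
    · simp [hT]

theorem indicatorExp_sub_indicatorExp (S T : Finset σ) :
    indicatorExp S - indicatorExp T = indicatorExp (S \ T) := by
  ext i
  simp only [Finsupp.tsub_apply, indicatorExp_apply, mem_sdiff]
  split_ifs <;> simp_all

theorem sum_indicatorExp [Fintype σ] (S : Finset σ) : ∑ i, indicatorExp S i = #S := by
  simp [indicatorExp_apply]

theorem eq_indicatorExp_support {m : σ →₀ ℕ} (hm : ∀ i, m i ≤ 1) : m = indicatorExp m.support := by
  ext i
  have := hm i
  simp only [indicatorExp_apply, Finsupp.mem_support_iff]
  split_ifs <;> omega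

theorem prod_descFactorial_indicatorExp [Fintype σ] {R : Type*} [CommSemiring R] (S : Finset σ)
    (m : σ →₀ ℕ) :
    ∏ i, ((indicatorExp S i).descFactorial (m i) : R) = if m ≤ indicatorExp S then 1 else 0 := by
  split_ifs with h
  · refine prod_eq_one fun i _ => ?_
    have := Finsupp.le_def.mp h i
    rw [indicatorExp_apply] at this ⊢
    split_ifs at this ⊢ <;> interval_cases m i <;> simp
  · obtain ⟨i, hi⟩ := not_forall.mp (mt Finsupp.le_def.mpr h)
    refine prod_eq_zero (mem_univ i) ?_
    rw [Nat.descFactorial_eq_zero_iff_lt.mpr (not_le.mp hi), Nat.cast_zero]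

theorem linearIndependent_monomial_indicatorExp (R : Type*) [CommSemiring R] :
    LinearIndependent R fun S : Finset σ => monomial (indicatorExp S) (1 : R) := by
  simpa only [coe_basisMonomials, Function.comp_def] using
    (basisMonomials σ R).linearIndependent.comp _ indicatorExp_injective

end IndicatorExp

section DerivMon

variable {n : ℕ}

theorem derivMon_sum {ι : Type*} (m : Fin n →₀ ℕ) (s : Finset ι) (f : ι → MvPolynomial (Fin n) ℂ) :
    derivMon m (∑ x ∈ s, f x) = ∑ x ∈ s, derivMon m (f x) := by
  unfold derivMon
  induction List.finRange n generalizing f with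
  | nil => rfl
  | cons i L ih =>
    rw [List.foldl_cons, ← Derivation.coeFn_coe, ← Module.End.coe_pow, map_sum, ih]
    simp only [List.foldl_cons, Module.End.coe_pow, Derivation.coeFn_coe]

theorem derivMon_monomial (m u : Fin n →₀ ℕ) (a : ℂ) :
    derivMon m (monomial u a) = monomial (u - m) (a * ∏ i, ((u i).descFactorial (m i) : ℂ)) := by
  rw [derivMon, foldl_iterate_pderiv_monomial m (List.nodup_finRange n), ← Fin.sum_univ_def,
    ← Fin.prod_univ_def, Finsupp.univ_sum_single]

theorem derivMon_monomial_indicatorExp (m : Fin n →₀ ℕ) (S : Finset (Fin n)) :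
    derivMon m (monomial (indicatorExp S) 1) =
      if m ≤ indicatorExp S then monomial (indicatorExp S - m) 1 else 0 := by
  rw [derivMon_monomial, prod_descFactorial_indicatorExp, one_mul]
  split_ifs <;> simp

theorem derivMon_esymm (m : Fin n →₀ ℕ) (d : ℕ) :
    derivMon m (esymm (Fin n) ℂ d) =
      ∑ S ∈ powersetCard d univ with m ≤ indicatorExp S, monomial (indicatorExp S - m) 1 := by
  rw [esymm_eq_sum_monomial, derivMon_sum, sum_filter]
  exact sum_congr rfl fun S _ => derivMon_monomial_indicatorExp m S

theorem derivMon_esymm_eq_zero {m : Fin n →₀ ℕ} (hm : ¬∀ i, m i ≤ 1) (d : ℕ) :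
    derivMon m (esymm (Fin n) ℂ d) = 0 := by
  rw [derivMon_esymm]
  refine sum_eq_zero fun S hS => absurd (fun i => ?_) hm
  exact ((mem_filter.mp hS).2 i).trans (indicatorExp_apply_le_one S i)

theorem derivMon_indicatorExp_esymm {d r : ℕ} (hr : r ≤ d) (T : {T : Finset (Fin n) // #T = r}) :
    derivMon (indicatorExp T.1) (esymm (Fin n) ℂ d) =
      ∑ U, disjointnessMatrix ℂ r (d - r) T U • monomial (indicatorExp U.1) 1 := by
  simp only [derivMon_esymm, indicatorExp_le_indicatorExp_iff, indicatorExp_sub_indicatorExp,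
    disjointnessMatrix, Matrix.of_apply, ite_smul, one_smul, zero_smul]
  rw [← sum_filter]
  refine sum_bij' (fun S hS => ⟨S \ T.1, ?_⟩) (fun U _ => U.1 ∪ T.1) ?_ ?_ ?_ ?_ ?_
  · obtain ⟨hSd, hTS⟩ := mem_filter.mp hS
    rw [card_sdiff_of_subset hTS, mem_powersetCard_univ.mp hSd, T.2]
  · intro S _
    simpa using disjoint_sdiff
  · intro U hU
    have hdisj : Disjoint T.1 U.1 := (mem_filter.mp hU).2
    simp only [mem_filter, mem_powersetCard_univ, subset_union_right, and_true]
    rw [card_union_of_disjoint hdisj.symm, U.2, T.2]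
    omega
  · intro S hS
    exact sdiff_union_of_subset (mem_filter.mp hS).2
  · intro U hU
    exact Subtype.ext (union_sdiff_cancel_right (mem_filter.mp hU).2.symm)
  · intro S _
    rfl

theorem span_derivMon_esymm {d r : ℕ} (hr : r ≤ d) :
    Submodule.span ℂ
        {G : MvPolynomial (Fin n) ℂ | ∃ m : Fin n →₀ ℕ, (∑ i, m i) = r ∧
          G = derivMon m (esymm (Fin n) ℂ d)} =
      Submodule.span ℂ (Set.range fun T =>
        ∑ U, disjointnessMatrix ℂ r (d - r) T U • monomial (indicatorExp U.1) (1 : ℂ)) := by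
  apply le_antisymm <;> rw [Submodule.span_le]
  · rintro G ⟨m, hm, rfl⟩
    by_cases hsq : ∀ i, m i ≤ 1
    · have hT : #m.support = r := by rw [← sum_indicatorExp, ← eq_indicatorExp_support hsq, hm]
      rw [eq_indicatorExp_support hsq, derivMon_indicatorExp_esymm hr ⟨_, hT⟩]
      exact Submodule.subset_span (Set.mem_range_self _)
    · rw [derivMon_esymm_eq_zero hsq]
      exact Submodule.zero_mem _
  · rintro G ⟨T, rfl⟩
    exact Submodule.subset_span
      ⟨indicatorExp T.1, by rw [sum_indicatorExp, T.2], (derivMon_indicatorExp_esymm hr T).symm⟩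

end DerivMon

/-- The Hilbert function of `S/(σ_{d,n})^⊥` in degree `r`, i.e. the rank of the `r`-th
catalecticant of `σ_{d,n}` (the dimension of the space spanned by the `r`-th order partial
derivatives of `σ_{d,n}`), equals `C(n,r)` for `r ≤ ⌊d/2⌋` and `C(n,d-r)` for `r > ⌊d/2⌋`. -/
theorem hilbert_function_esymm_apolar (d n r : ℕ) (hd : d ≤ n) (hr : r ≤ d) :
    Module.finrank ℂ (Submodule.span ℂ
        {G : MvPolynomial (Fin n) ℂ | ∃ m : Fin n →₀ ℕ, (∑ i, m i) = r ∧
          G = derivMon m (esymm (Fin n) ℂ d)}) =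
      if r ≤ d / 2 then n.choose r else n.choose (d - r) := by
  have hv : LinearIndependent ℂ fun U : {U : Finset (Fin n) // #U = d - r} =>
      monomial (indicatorExp U.1) (1 : ℂ) :=
    (linearIndependent_monomial_indicatorExp ℂ).comp _ Subtype.val_injective
  rw [span_derivMon_esymm hr, finrank_span_range_sum_smul hv,
    rank_disjointnessMatrix ℂ (by rw [Fintype.card_fin]; omega), Fintype.card_fin]
  split_ifs <;> congr 1 <;> omega
end

section
/- For d ≤ n, the symmetric tensor rank of the elementary symmetric polynomial σ_{d,n} over ℂ is at least C(n, ⌊d/2⌋). -/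
/-!
If `σ_{d,n} = ∑_{i<s} L_i ^ d`, put `k = ⌊d/2⌋` and `m = d - k`. For a `k`-set `S` of variables,
`∂_S (L ^ d)` is a multiple of `L ^ m`, so the `C(n, k)` derivatives `∂_S σ_{d,n}` all lie in the
span of the `s` forms `L_i ^ m`; it remains to see that they are linearly independent. Given a
relation `∑ c_S ∂_S σ_{d,n} = 0`, apply `∂_T` and evaluate at `(1, …, 1)`: since
`∂_T ∂_S σ_{d,n} = σ_{m - |T|}(x_j : j ∉ S ∪ T)` when `S ∩ T = ∅` (and `0` otherwise), this gives
`∑_{S ∩ T = ∅} c_S = 0` for every `|T| ≤ m`, the binomial factor being nonzero as `k + m ≤ n`.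
Möbius inversion on the subsets `T ⊆ S₀` (all of size `≤ k ≤ m`) then yields `c_{S₀} = 0`.

The infimum defining the rank is over a nonempty set: by polarization, every squarefree monomial,
hence `σ_{d,n}`, is a combination of `d`-th powers of linear forms, and over `ℂ` the coefficients
are absorbed by taking `d`-th roots.
-/

open MvPolynomial Finset

/-- The symmetric tensor (Waring) rank of a form `F ∈ ℂ[x_1,…,x_n]` of degree `d`:
the least `s` such that `F = ∑_{i=1}^s L_i^d` with `L_i` linear forms. -/
noncomputable def waringRank {n : ℕ} (d : ℕ) (F : MvPolynomial (Fin n) ℂ) : ℕ :=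
  sInf {s | ∃ L : Fin s → Fin n → ℂ, F = ∑ i, (∑ j, C (L i j) * X j) ^ d}

namespace Finset

variable {α R : Type*} [DecidableEq α] [CommRing R]

theorem sum_powerset_filter_disjoint_neg_one_pow (s t : Finset α) :
    ∑ u ∈ s.powerset with Disjoint t u, (-1 : R) ^ #u = if s ⊆ t then 1 else 0 := by
  have h : {u ∈ s.powerset | Disjoint t u} = (s \ t).powerset := by
    ext u; simp [subset_sdiff, disjoint_comm]
  have := congrArg (Int.cast : ℤ → R) (sum_powerset_neg_one_pow_card (x := s \ t))
  push_cast at this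
  rw [h, this]
  simp only [sdiff_eq_empty_iff_subset]

theorem sum_powerset_neg_one_pow_mul_sum_disjoint [Fintype α] {k : ℕ}
    (c : {s : Finset α // #s = k} → R) (s₀ : {s : Finset α // #s = k}) :
    ∑ t ∈ s₀.1.powerset, (-1) ^ #t * ∑ s with Disjoint s.1 t, c s = c s₀ := by
  calc ∑ t ∈ s₀.1.powerset, (-1) ^ #t * ∑ s with Disjoint s.1 t, c s
      = ∑ s, (∑ t ∈ s₀.1.powerset with Disjoint s.1 t, (-1) ^ #t) * c s := by
        simp only [sum_filter, mul_sum, sum_mul, mul_ite, ite_mul, mul_zero, zero_mul]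
        exact sum_comm
    _ = ∑ s, if s = s₀ then c s else 0 := by
        refine sum_congr rfl fun s _ => ?_
        have : s₀.1 ⊆ s.1 ↔ s = s₀ :=
          ⟨fun h => (Subtype.ext (eq_of_subset_of_card_le h (by rw [s.2, s₀.2]))).symm,
            fun h => h ▸ subset_rfl⟩
        simp [sum_powerset_filter_disjoint_neg_one_pow, this]
    _ = c s₀ := by simp

theorem sum_powerset_neg_one_pow_mul_sum_sdiff_pow (s : Finset α) (f : α → R) (d : ℕ) :
    ∑ t ∈ s.powerset, (-1) ^ #t * (∑ i ∈ s \ t, f i) ^ d =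
      ∑ p ∈ Fintype.piFinset (fun _ : Fin d => s) with univ.image p = s, ∏ i, f (p i) := by
  calc ∑ t ∈ s.powerset, (-1) ^ #t * (∑ i ∈ s \ t, f i) ^ d
      = ∑ t ∈ s.powerset, (-1) ^ #t *
          ∑ p ∈ Fintype.piFinset (fun _ : Fin d => s) with Disjoint (univ.image p) t,
            ∏ i, f (p i) := by
        refine sum_congr rfl fun t _ => ?_
        rw [sum_pow']
        congr 2
        ext p
        simp [Fintype.mem_piFinset, forall_and, disjoint_left]
    _ = ∑ p ∈ Fintype.piFinset (fun _ : Fin d => s),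
          (∑ t ∈ s.powerset with Disjoint (univ.image p) t, (-1) ^ #t) * ∏ i, f (p i) := by
        simp only [sum_filter, mul_sum, sum_mul, mul_ite, ite_mul, mul_zero, zero_mul]
        exact sum_comm
    _ = _ := by
        rw [sum_filter]
        refine sum_congr rfl fun p hp => ?_
        have hps : univ.image p ⊆ s := by simpa [subset_iff] using hp
        simp [sum_powerset_filter_disjoint_neg_one_pow, subset_antisymm_iff, hps]

end Finset

namespace MvPolynomial

section CommRing

variable {R σ : Type*} [CommRing R]

theorem pderiv_pderiv_comm (i j : σ) (p : MvPolynomial σ R) :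
    pderiv i (pderiv j p) = pderiv j (pderiv i p) := by
  classical
  have h : ⁅pderiv i, pderiv j⁆ = (0 : Derivation R (MvPolynomial σ R) (MvPolynomial σ R)) :=
    derivation_ext fun l => by
      rw [Derivation.commutator_apply, pderiv_X, pderiv_X]
      simp [Pi.single_apply, apply_ite]
  rw [← sub_eq_zero, ← Derivation.commutator_apply, h, Derivation.zero_apply]

noncomputable def iteratedPDeriv (S : Finset σ) : Module.End R (MvPolynomial σ R) :=
  S.noncommProd (fun i => (pderiv i).toLinearMap)
    fun i _ j _ _ => LinearMap.ext fun p => pderiv_pderiv_comm i j p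

@[simp]
theorem iteratedPDeriv_empty :
    iteratedPDeriv (∅ : Finset σ) = (1 : Module.End R (MvPolynomial σ R)) :=
  noncommProd_empty _ _

section LinearForm

variable [Fintype σ]

noncomputable def linearForm (a : σ → R) : MvPolynomial σ R := ∑ i, C (a i) * X i

theorem linearForm_smul (r : R) (a : σ → R) : linearForm (r • a) = C r * linearForm a := by
  simp [linearForm, mul_sum, mul_assoc]

theorem pderiv_linearForm (a : σ → R) (i : σ) : pderiv i (linearForm a) = C (a i) := by
  classical
  simp [linearForm, pderiv_X, Pi.single_apply]

end LinearForm

variable [DecidableEq σ]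

theorem iteratedPDeriv_insert {S : Finset σ} {i : σ} (hi : i ∉ S)
    (p : MvPolynomial σ R) : iteratedPDeriv (insert i S) p = pderiv i (iteratedPDeriv S p) :=
  LinearMap.congr_fun (noncommProd_insert_of_notMem _ _ _ _ hi) p

theorem pderiv_prod_X (i : σ) (A : Finset σ) :
    pderiv i (∏ j ∈ A, X j : MvPolynomial σ R) = if i ∈ A then ∏ j ∈ A.erase i, X j else 0 := by
  induction A using Finset.induction_on with
  | empty => simp
  | insert b A hb ih =>
    rw [prod_insert hb, pderiv_mul, ih]
    rcases eq_or_ne i b with rfl | hib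
    · simp [hb]
    · by_cases hiA : i ∈ A
      · simp [hib, hiA, pderiv_X_of_ne (Ne.symm hib), erase_insert_of_ne (Ne.symm hib),
          prod_insert (fun h => hb (mem_of_mem_erase h))]
      · simp [hib, hiA, pderiv_X_of_ne (Ne.symm hib)]

theorem iteratedPDeriv_prod_X (S A : Finset σ) :
    iteratedPDeriv S (∏ j ∈ A, X j : MvPolynomial σ R) =
      if S ⊆ A then ∏ j ∈ A \ S, X j else 0 := by
  induction S using Finset.induction_on with
  | empty => simp
  | insert i S hi ih =>
    rw [iteratedPDeriv_insert hi, ih]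
    by_cases hSA : S ⊆ A
    · simp [hSA, pderiv_prod_X, hi, sdiff_insert, insert_subset_iff]
    · simp [hSA, insert_subset_iff]

theorem iteratedPDeriv_sum_powersetCard_prod_X (U S : Finset σ) {d : ℕ} (hS : #S ≤ d) :
    iteratedPDeriv S (∑ A ∈ U.powersetCard d, ∏ j ∈ A, X j : MvPolynomial σ R) =
      if S ⊆ U then ∑ A ∈ (U \ S).powersetCard (d - #S), ∏ j ∈ A, X j else 0 := by
  simp_rw [map_sum, iteratedPDeriv_prod_X, ← sum_filter]
  split_ifs with hSU
  · refine sum_nbij' (· \ S) (· ∪ S) ?_ ?_ ?_ ?_ fun _ _ => rfl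
    · intro A hA
      simp only [mem_filter, mem_powersetCard] at hA
      simp only [mem_powersetCard, card_sdiff_of_subset hA.2, hA.1.2, and_true]
      exact sdiff_subset_sdiff hA.1.1 le_rfl
    · intro A hA
      simp only [mem_powersetCard, subset_sdiff] at hA
      simp only [mem_filter, mem_powersetCard, card_union_of_disjoint hA.1.2, hA.2]
      exact ⟨⟨union_subset hA.1.1 hSU, by omega⟩, subset_union_right⟩
    · intro A hA
      exact sdiff_union_of_subset (mem_filter.1 hA).2
    · intro A hA
      simp only [mem_powersetCard, subset_sdiff] at hA
      exact union_sdiff_cancel_right hA.1.2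
  · refine sum_eq_zero fun A hA => absurd ?_ hSU
    simp only [mem_filter, mem_powersetCard] at hA
    exact hA.2.trans hA.1.1

variable [Fintype σ]

theorem linearForm_indicator (s : Finset σ) :
    linearForm (fun j => if j ∈ s then 1 else 0) = (∑ j ∈ s, X j : MvPolynomial σ R) := by
  simp [linearForm, apply_ite C, ite_mul, sum_ite_mem]

theorem iteratedPDeriv_linearForm_pow (a : σ → R) (S : Finset σ) (e : ℕ) :
    iteratedPDeriv S (linearForm a ^ e) =
      ((e.descFactorial #S : R) * ∏ i ∈ S, a i) • linearForm a ^ (e - #S) := by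
  induction S using Finset.induction_on with
  | empty => simp
  | insert i S hi ih =>
    rw [iteratedPDeriv_insert hi, ih, Derivation.map_smul, pderiv_pow, pderiv_linearForm,
      card_insert_of_notMem hi, Nat.descFactorial_succ, prod_insert hi, ← Nat.sub_sub]
    simp only [smul_eq_C_mul, map_mul, map_natCast]
    push_cast
    ring

theorem eval_one_iteratedPDeriv_iteratedPDeriv_esymm {k m : ℕ} {S T : Finset σ} (hS : #S = k)
    (hT : #T ≤ m) :
    eval 1 (iteratedPDeriv T (iteratedPDeriv S (esymm σ R (k + m)))) =
      if Disjoint S T then ((Fintype.card σ - k - #T).choose (m - #T) : R) else 0 := by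
  rw [esymm, iteratedPDeriv_sum_powersetCard_prod_X _ _ (by omega), if_pos (subset_univ S), hS,
    add_tsub_cancel_left, iteratedPDeriv_sum_powersetCard_prod_X _ _ hT]
  by_cases hST : Disjoint S T
  · have hTS : T ⊆ univ \ S := subset_sdiff.2 ⟨subset_univ T, hST.symm⟩
    rw [if_pos hTS, if_pos hST]
    simp [card_sdiff_of_subset hTS, card_univ_sdiff, hS]
  · rw [if_neg fun h => hST (subset_sdiff.1 h).2.symm, if_neg hST, map_zero]

end CommRing

section Field

variable {K σ : Type*} [Field K] [Fintype σ]

theorem exists_eq_sum_pow_linearForm_of_mem_span [IsAlgClosed K] {d : ℕ} (hd : d ≠ 0)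
    {F : MvPolynomial σ K}
    (hF : F ∈ Submodule.span K (Set.range fun a : σ → K => linearForm a ^ d)) :
    ∃ s, ∃ L : Fin s → σ → K, F = ∑ i, linearForm (L i) ^ d := by
  obtain ⟨s, c, g, rfl⟩ := Submodule.mem_span_set'.1 hF
  choose a ha using fun i => (g i).2
  choose r hr using fun i => IsAlgClosed.exists_pow_nat_eq (c i) (Nat.pos_of_ne_zero hd)
  refine ⟨s, fun i => r i • a i, sum_congr rfl fun i _ => ?_⟩
  rw [linearForm_smul, mul_pow, ← map_pow, hr, ← smul_eq_C_mul]
  exact congrArg (c i • ·) (ha i).symm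

variable [DecidableEq σ]

theorem prod_X_mem_span_pow_linearForm [CharZero K] (A : Finset σ) :
    ∏ j ∈ A, X j ∈ Submodule.span K (Set.range fun a : σ → K => linearForm a ^ #A) := by
  set P := {p ∈ Fintype.piFinset (fun _ : Fin #A => A) | univ.image p = A}
  have hP : ∀ p ∈ P, ∏ i, X (p i) = (∏ j ∈ A, X j : MvPolynomial σ K) := by
    intro p hp
    have himage : univ.image p = A := (mem_filter.1 hp).2
    have hinj : Set.InjOn p (univ : Finset (Fin #A)) :=
      injOn_of_card_image_eq (by rw [himage, card_univ, Fintype.card_fin])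
    calc ∏ i, X (p i) = ∏ j ∈ univ.image p, (X j : MvPolynomial σ K) := (prod_image hinj).symm
      _ = ∏ j ∈ A, X j := by rw [himage]
  have hP₀ : (fun i => (A.equivFin.symm i : σ)) ∈ P := by
    refine mem_filter.2 ⟨Fintype.mem_piFinset.2 fun i => (A.equivFin.symm i).2, ?_⟩
    ext x
    refine ⟨fun hx => ?_, fun hx => mem_image.2 ⟨A.equivFin ⟨x, hx⟩, mem_univ _, by simp⟩⟩
    obtain ⟨i, -, rfl⟩ := mem_image.1 hx
    exact (A.equivFin.symm i).2
  have hpolar := sum_powerset_neg_one_pow_mul_sum_sdiff_pow A (X : σ → MvPolynomial σ K) #A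
  rw [sum_congr rfl hP, sum_const, ← Nat.cast_smul_eq_nsmul K] at hpolar
  rw [← inv_smul_smul₀ (Nat.cast_ne_zero.2 (card_ne_zero_of_mem hP₀) : (#P : K) ≠ 0)
    (∏ j ∈ A, X j), ← hpolar]
  refine Submodule.smul_mem _ _ (Submodule.sum_mem _ fun t _ => ?_)
  rw [← linearForm_indicator, show (-1 : MvPolynomial σ K) ^ #t = C ((-1) ^ #t) by simp,
    ← smul_eq_C_mul]
  exact Submodule.smul_mem _ _ (Submodule.subset_span ⟨_, rfl⟩)

theorem esymm_mem_span_pow_linearForm [CharZero K] (d : ℕ) :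
    esymm σ K d ∈ Submodule.span K (Set.range fun a : σ → K => linearForm a ^ d) :=
  Submodule.sum_mem _ fun A hA => (mem_powersetCard.1 hA).2 ▸ prod_X_mem_span_pow_linearForm A

theorem linearIndependent_iteratedPDeriv_esymm [CharZero K] {k m : ℕ} (hkm : k ≤ m)
    (hn : k + m ≤ Fintype.card σ) :
    LinearIndependent K fun S : {S : Finset σ // #S = k} =>
      iteratedPDeriv S.1 (esymm σ K (k + m)) := by
  rw [Fintype.linearIndependent_iff]
  intro c hc S₀
  have hdisj : ∀ T : Finset σ, #T ≤ m → ∑ S with Disjoint S.1 T, c S = 0 := by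
    intro T hT
    have h := congrArg (fun p => eval 1 (iteratedPDeriv T p)) hc
    simp only [map_sum, map_smul, smul_eval, map_zero, fun S : {S : Finset σ // #S = k} =>
      eval_one_iteratedPDeriv_iteratedPDeriv_esymm (R := K) S.2 hT] at h
    have hchoose : ((Fintype.card σ - k - #T).choose (m - #T) : K) ≠ 0 :=
      Nat.cast_ne_zero.2 (Nat.choose_pos (by omega)).ne'
    simp_rw [mul_ite, mul_zero, ← sum_filter, ← sum_mul] at h
    exact (mul_eq_zero.1 h).resolve_right hchoose
  rw [← sum_powerset_neg_one_pow_mul_sum_disjoint c S₀]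
  refine sum_eq_zero fun T hT => ?_
  rw [hdisj T ((card_le_card (mem_powerset.1 hT)).trans (S₀.2.trans_le hkm)), mul_zero]

theorem choose_le_of_esymm_eq_sum_pow_linearForm [CharZero K] {d k s : ℕ} (hk : 2 * k ≤ d)
    (hd : d ≤ Fintype.card σ) (L : Fin s → σ → K) (hL : esymm σ K d = ∑ i, linearForm (L i) ^ d) :
    (Fintype.card σ).choose k ≤ s := by
  obtain ⟨m, rfl⟩ : ∃ m, d = k + m := ⟨d - k, by omega⟩
  have hmem : ∀ S : {S : Finset σ // #S = k}, iteratedPDeriv S.1 (esymm σ K (k + m)) ∈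
      Submodule.span K (Set.range fun i => linearForm (L i) ^ m) := by
    intro S
    rw [hL, map_sum]
    refine Submodule.sum_mem _ fun i _ => ?_
    rw [iteratedPDeriv_linearForm_pow, S.2, add_tsub_cancel_left]
    exact Submodule.smul_mem _ _ (Submodule.subset_span ⟨i, rfl⟩)
  have : FiniteDimensional K (Submodule.span K (Set.range fun i => linearForm (L i) ^ m)) :=
    FiniteDimensional.span_of_finite K (Set.finite_range _)
  calc (Fintype.card σ).choose k = Fintype.card {S : Finset σ // #S = k} :=
        (Fintype.card_finset_len k).symm
    _ = Module.finrank K (Submodule.span K (Set.range fun S : {S : Finset σ // #S = k} =>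
          iteratedPDeriv S.1 (esymm σ K (k + m)))) :=
        (finrank_span_eq_card (linearIndependent_iteratedPDeriv_esymm (by omega) hd)).symm
    _ ≤ Module.finrank K (Submodule.span K (Set.range fun i => linearForm (L i) ^ m)) :=
        Submodule.finrank_mono (Submodule.span_le.2 (Set.range_subset_iff.2 hmem))
    _ ≤ s := (finrank_range_le_card _).trans (Fintype.card_fin s).le

end Field

end MvPolynomial

/-- For `d ≤ n`, the Waring rank of `σ_{d,n}` is at least `C(n, ⌊d/2⌋)`. -/
theorem waringRank_esymm_ge (d n : ℕ) (hd : d ≤ n) :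
    n.choose (d / 2) ≤ waringRank d (esymm (Fin n) ℂ d) := by
  have hdecomp : {s | ∃ L : Fin s → Fin n → ℂ,
      esymm (Fin n) ℂ d = ∑ i, (∑ j, C (L i j) * X j) ^ d}.Nonempty := by
    rcases eq_or_ne d 0 with rfl | hd₀
    · exact ⟨1, 0, by simp⟩
    · exact exists_eq_sum_pow_linearForm_of_mem_span hd₀ (esymm_mem_span_pow_linearForm d)
  refine le_csInf hdecomp fun s ⟨L, hL⟩ => ?_
  simpa using choose_le_of_esymm_eq_sum_pow_linearForm (by omega) (by simpa using hd) L hL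
end

section
/- Let d = 2k be even and n > d. Then 2^d (n-d) d! · σ_{d,n} = Σ_{I ⊆ [n], |I| ≤ k} (-1)^{|I|} C(n-k-|I|-1, k-|I|) (n-2|I|) (δ(I,1)x_1 + ⋯ + δ(I,n)x_n)^d, as a polynomial identity over ℂ. -/
/-!
Expand every power by the multinomial theorem. The coefficient of `x^m` on the right is
`multinomial m` times `∑_I c_{|I|} (-1)^{∑_{i ∈ I} m_i}`, where `c_s` is the scalar attached to
the subsets `I` of size `s`. That sign sum depends only on the number `a` of odd `m_i`: it equals
`∑_s c_s [y^s] (1 - y)^a (1 + y)^{n-a}`. Put `N = n - d`. Then `c_s` is `(-1)^k N` times the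
`(k - s)`-th coefficient of `(1 - y)(1 + y)^{-(N+1)}`, so the sign sum is `(-1)^k N` times
`[y^k] (1 - y)^{a+1} (1 + y)^{d-a-1}`. Here `a` is even and `a ≤ d`. For `a < d` that is the
middle coefficient of an antipalindromic polynomial of degree `d`, hence `0`. For `a = d`, which
happens exactly when `x^m` is squarefree, it is `[y^k] (1 - y)^{d+1} / (1 + y) = (-4)^k`. So only
the squarefree monomials survive, each with coefficient `d! · 4^k · N`.
-/

open Finset

theorem Nat.mul_choose_add_choose (N i : ℕ) :
    N * ((N + (i + 1)).choose N + (N + i).choose N) =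
      (N + i).choose (i + 1) * (N + 2 * (i + 1)) := by
  have h1 := Nat.add_one_mul_choose_eq (N + i) i
  have h2 := Nat.choose_succ_right_eq (N + i) i
  rw [Nat.add_sub_cancel] at h2
  rw [Nat.choose_symm_add, Nat.choose_symm_add, ← add_assoc]
  apply Nat.eq_of_mul_eq_mul_left (by omega : 0 < i + 1)
  linear_combination N * h1.symm + (N + 2 * (i + 1)) * h2.symm

theorem Nat.ite_odd_one_zero_le (x : ℕ) : (if Odd x then 1 else 0) ≤ x := by
  split_ifs with h
  · exact h.pos
  · exact Nat.zero_le x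

theorem Nat.multinomial_eq_factorial_of_le_one {ι : Type*} (s : Finset ι) {m : ι → ℕ}
    (hm : ∀ i ∈ s, m i ≤ 1) : Nat.multinomial s m = (∑ i ∈ s, m i).factorial := by
  have h := Nat.multinomial_spec s m
  rwa [prod_eq_one fun i hi => Nat.factorial_eq_one.mpr (hm i hi), one_mul] at h

namespace Polynomial

theorem reflect_pow_of_natDegree_le {R : Type*} [CommSemiring R] {p : R[X]} {M : ℕ}
    (hp : p.natDegree ≤ M) (e : ℕ) : reflect (M * e) (p ^ e) = reflect M p ^ e := by
  induction e with
  | zero => simp [reflect_one]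
  | succ e ih =>
    rw [pow_succ, pow_succ, Nat.mul_succ,
      reflect_mul _ _ ((natDegree_pow_le).trans (by rw [mul_comm]; gcongr)) hp, ih]

/-- Reflection in degree `2k` sends this polynomial to its negative and fixes the index `k`. -/
theorem coeff_one_sub_X_pow_mul_one_add_X_pow_of_odd {a b k : ℕ} (ha : Odd a)
    (hab : a + b = 2 * k) : ((1 - X) ^ a * (1 + X) ^ b : ℤ[X]).coeff k = 0 := by
  have hdeg_sub : (1 - X : ℤ[X]).natDegree ≤ 1 := by compute_degree!
  have hdeg_add : (1 + X : ℤ[X]).natDegree ≤ 1 := by compute_degree!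
  have hreflect_sub := reflect_pow_of_natDegree_le hdeg_sub a
  have hreflect_add := reflect_pow_of_natDegree_le hdeg_add b
  have hX : reflect 1 (X : ℤ[X]) = 1 := by simp
  simp only [one_mul, reflect_sub, reflect_add, reflect_one, hX, pow_one]
    at hreflect_sub hreflect_add
  have hreflect : reflect (a + b) ((1 - X) ^ a * (1 + X) ^ b : ℤ[X]) =
      -((1 - X) ^ a * (1 + X) ^ b) := by
    rw [reflect_mul _ _ (by simpa using natDegree_pow_le_of_le a hdeg_sub)
      (by simpa using natDegree_pow_le_of_le b hdeg_add), hreflect_sub, hreflect_add,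
      show (X - 1 : ℤ[X]) = -(1 - X) by ring, neg_pow, ha.neg_one_pow, add_comm X]
    ring
  have h := coeff_reflect (a + b) ((1 - X) ^ a * (1 + X) ^ b : ℤ[X]) k
  rw [hreflect, hab, revAt_le (by omega), show 2 * k - k = k by omega, coeff_neg] at h
  omega

end Polynomial

namespace PowerSeries

section CommRing

variable {A : Type*} [CommRing A]

theorem coeff_one_add_X_pow (m i : ℕ) : coeff i ((1 + X : A⟦X⟧) ^ m) = m.choose i := by
  rw [← binomialSeries_nat (R := ℤ), binomialSeries_coeff, Ring.choose_natCast, zsmul_one,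
    Int.cast_natCast]

theorem coeff_one_sub_X_pow (m i : ℕ) :
    coeff i ((1 - X : A⟦X⟧) ^ m) = (-1) ^ i * m.choose i := by
  have h : (1 - X : A⟦X⟧) ^ m = rescale (-1) ((1 + X) ^ m) := by
    simp [sub_eq_add_neg]
  rw [h, coeff_rescale, coeff_one_add_X_pow]

theorem coeff_binomialSeries_neg_natCast_succ (N j : ℕ) :
    coeff j (binomialSeries A (-(N + 1 : ℕ) : ℤ)) = (-1) ^ j * (N + j).choose N := by
  rw [← rescale_neg_one_invOneSubPow, coeff_rescale, invOneSubPow_val_succ_eq_mk_add_choose,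
    coeff_mk]

theorem coeff_binomialSeries_neg_one (j : ℕ) :
    coeff j (binomialSeries A (-1 : ℤ)) = (-1) ^ j := by
  simpa using coeff_binomialSeries_neg_natCast_succ (A := A) 0 j

theorem one_add_X_pow_mul_binomialSeries (m : ℕ) (r : ℤ) :
    (1 + X : A⟦X⟧) ^ m * binomialSeries A r = binomialSeries A (m + r) := by
  rw [← binomialSeries_nat (R := ℤ), ← binomialSeries_add]

theorem natCast_mul_coeff_one_sub_X_mul_binomialSeries (N j : ℕ) :
    (N : A) * coeff j ((1 - X) * binomialSeries A (-(N + 1 : ℕ) : ℤ)) =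
      (-1) ^ j * (N + j - 1).choose j * (N + 2 * j : ℕ) := by
  cases j with
  | zero =>
    rw [sub_mul, one_mul, map_sub, coeff_zero_X_mul, coeff_binomialSeries_neg_natCast_succ]
    simp
  | succ i =>
    rw [sub_mul, one_mul, map_sub, coeff_succ_X_mul, coeff_binomialSeries_neg_natCast_succ,
      coeff_binomialSeries_neg_natCast_succ, show N + (i + 1) - 1 = N + i by omega]
    have h := congrArg (Nat.cast : ℕ → A) (Nat.mul_choose_add_choose N i)
    push_cast at h ⊢
    linear_combination (-1) ^ (i + 1) * h

theorem coeff_prod_one_add_C_mul_X {ι : Type*} [DecidableEq ι] (t : Finset ι) (w : ι → A)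
    (s : ℕ) : coeff s (∏ i ∈ t, (1 + C (w i) * X)) = ∑ I ∈ powersetCard s t, ∏ i ∈ I, w i := by
  simp_rw [add_comm (1 : A⟦X⟧), prod_add, prod_const_one, mul_one, prod_mul_distrib, ← map_prod,
    prod_const, map_sum, coeff_C_mul_X_pow, powersetCard_eq_filter, sum_filter, eq_comm]

end CommRing

theorem sum_powersetCard_neg_one_pow_sum {ι : Type*} [Fintype ι] [DecidableEq ι] (m : ι → ℕ)
    (s : ℕ) :
    ∑ I ∈ powersetCard s univ, (-1 : ℤ) ^ ∑ i ∈ I, m i =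
      coeff s ((1 - X) ^ #{i | Odd (m i)} * (1 + X) ^ (Fintype.card ι - #{i | Odd (m i)})) := by
  have hfactor : ∀ i, 1 + C ((-1 : ℤ) ^ m i) * X = if Odd (m i) then 1 - X else 1 + X := by
    intro i
    split_ifs with h
    · simp [h.neg_one_pow, sub_eq_add_neg]
    · simp [(Nat.not_odd_iff_even.mp h).neg_one_pow]
  simp_rw [← prod_pow_eq_pow_sum, ← coeff_prod_one_add_C_mul_X, hfactor, prod_ite, prod_const,
    ← card_univ, ← card_filter_add_card_filter_not (s := univ) (fun i => Odd (m i)),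
    Nat.add_sub_cancel_left]

theorem sum_range_choose_mul_coeff {n k : ℕ} (hn : 2 * k < n) (G : ℤ⟦X⟧) :
    ∑ s ∈ range (k + 1),
        (-1) ^ s * ((n - k - s - 1).choose (k - s) : ℤ) * (n - 2 * s : ℕ) * coeff s G =
      (-1) ^ k * (n - 2 * k : ℕ) *
        coeff k (G * ((1 - X) * binomialSeries ℤ (-(n - 2 * k + 1 : ℕ) : ℤ))) := by
  rw [coeff_mul, Nat.sum_antidiagonal_eq_sum_range_succ (fun i j => coeff i G * coeff j _),
    mul_sum]
  refine sum_congr rfl fun s hs => ?_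
  obtain ⟨j, rfl⟩ : ∃ j, k = s + j := ⟨k - s, by simp at hs; omega⟩
  have h := natCast_mul_coeff_one_sub_X_mul_binomialSeries (A := ℤ) (n - 2 * (s + j)) j
  have hsign : (-1 : ℤ) ^ s = (-1) ^ (s + j) * (-1) ^ j := by
    rw [pow_add, mul_assoc, pow_mul_pow_eq_one (a := (-1 : ℤ)) (b := -1) j (by norm_num), mul_one]
  rw [Nat.add_sub_cancel_left, show n - (s + j) - s - 1 = n - 2 * (s + j) + j - 1 by omega,
    show n - 2 * s = n - 2 * (s + j) + 2 * j by omega, hsign]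
  linear_combination (-(-1) ^ (s + j) * coeff s G) * h

theorem coeff_mul_one_sub_X_mul_binomialSeries_of_lt {n k a : ℕ} (hn : 2 * k < n) (ha : Even a)
    (hak : a < 2 * k) :
    coeff k ((1 - X) ^ a * (1 + X) ^ (n - a) *
      ((1 - X) * binomialSeries ℤ (-(n - 2 * k + 1 : ℕ) : ℤ))) = 0 := by
  have hinv : (1 + X : ℤ⟦X⟧) ^ (n - 2 * k + 1) *
      binomialSeries ℤ (-(n - 2 * k + 1 : ℕ) : ℤ) = 1 := by
    rw [one_add_X_pow_mul_binomialSeries, add_neg_cancel, binomialSeries_zero]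
  have hpoly : (1 - X) ^ a * (1 + X) ^ (n - a) *
      ((1 - X) * binomialSeries ℤ (-(n - 2 * k + 1 : ℕ) : ℤ)) =
      (((1 - Polynomial.X) ^ (a + 1) * (1 + Polynomial.X) ^ (2 * k - a - 1) :
        Polynomial ℤ) : ℤ⟦X⟧) := by
    simp only [Polynomial.coe_mul, Polynomial.coe_pow, Polynomial.coe_sub, Polynomial.coe_add,
      Polynomial.coe_one, Polynomial.coe_X]
    rw [show n - a = 2 * k - a - 1 + (n - 2 * k + 1) by omega, pow_add]
    linear_combination (1 - X) ^ (a + 1) * (1 + X) ^ (2 * k - a - 1) * hinv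
  rw [hpoly, Polynomial.coeff_coe]
  exact Polynomial.coeff_one_sub_X_pow_mul_one_add_X_pow_of_odd ha.add_one (by omega)

theorem coeff_mul_one_sub_X_mul_binomialSeries_of_eq (N k : ℕ) :
    coeff k ((1 - X) ^ (2 * k) * (1 + X) ^ N *
      ((1 - X) * binomialSeries ℤ (-(N + 1 : ℕ) : ℤ))) = (-1) ^ k * 4 ^ k := by
  have h : (1 - X) ^ (2 * k) * (1 + X) ^ N * ((1 - X) * binomialSeries ℤ (-(N + 1 : ℕ) : ℤ)) =
      (1 - X) ^ (2 * k + 1) * binomialSeries ℤ (-1 : ℤ) := by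
    rw [show ∀ B : ℤ⟦X⟧, (1 - X) ^ (2 * k) * (1 + X) ^ N * ((1 - X) * B) =
      (1 - X) ^ (2 * k + 1) * ((1 + X) ^ N * B) from fun B => by ring,
      one_add_X_pow_mul_binomialSeries]
    congr 2
    push_cast
    ring
  have hterm : ∀ i ∈ range (k + 1), coeff i ((1 - X : ℤ⟦X⟧) ^ (2 * k + 1)) *
      coeff (k - i) (binomialSeries ℤ (-1 : ℤ)) = (-1) ^ k * (2 * k + 1).choose i := by
    intro i hi
    rw [coeff_one_sub_X_pow, coeff_binomialSeries_neg_one, mul_right_comm, ← pow_add,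
      Nat.add_sub_cancel' (by simp at hi; omega)]
  rw [h, coeff_mul, Nat.sum_antidiagonal_eq_sum_range_succ (fun i j => coeff i _ * coeff j _),
    sum_congr rfl hterm, ← mul_sum, ← Nat.cast_sum, Nat.sum_range_choose_halfway]
  push_cast
  rfl

theorem sum_range_choose_mul_coeff_one_sub_X_pow_mul_one_add_X_pow {n k a : ℕ} (hn : 2 * k < n)
    (ha : Even a) (hak : a ≤ 2 * k) :
    ∑ s ∈ range (k + 1), (-1) ^ s * ((n - k - s - 1).choose (k - s) : ℤ) * (n - 2 * s : ℕ) *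
        coeff s ((1 - X) ^ a * (1 + X) ^ (n - a)) =
      if a = 2 * k then (4 : ℤ) ^ k * (n - 2 * k : ℕ) else 0 := by
  rw [sum_range_choose_mul_coeff hn]
  split_ifs with h
  · subst h
    rw [coeff_mul_one_sub_X_mul_binomialSeries_of_eq]
    linear_combination (4 ^ k * (n - 2 * k : ℕ) : ℤ) *
      pow_mul_pow_eq_one (a := (-1 : ℤ)) (b := -1) k (by norm_num)
  · rw [coeff_mul_one_sub_X_mul_binomialSeries_of_lt hn ha (lt_of_le_of_ne hak h), mul_zero]

end PowerSeries

namespace Finset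

theorem sum_powerset_filter_card_le {ι M : Type*} [DecidableEq ι] [AddCommMonoid M]
    (t : Finset ι) (k : ℕ) (f : Finset ι → M) :
    ∑ I ∈ t.powerset with #I ≤ k, f I = ∑ s ∈ range (k + 1), ∑ I ∈ powersetCard s t, f I := by
  rw [← sum_fiberwise_of_maps_to (g := card) (t := range (k + 1))
    (fun I hI => by simp at hI ⊢; omega)]
  refine sum_congr rfl fun s hs => sum_congr ?_ fun _ _ => rfl
  ext I
  simp only [mem_filter, mem_powerset, mem_powersetCard, mem_range] at hs ⊢
  grind

theorem sum_mul_sum_ite_neg_one_mul_pow {ι R : Type*} [Fintype ι] [DecidableEq ι]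
    [CommRing R] (S : Finset (Finset ι)) (c : Finset ι → R) (x : ι → R) (d : ℕ) :
    ∑ I ∈ S, c I * (∑ i, (if i ∈ I then -1 else 1) * x i) ^ d =
      ∑ m ∈ piAntidiag univ d,
        Nat.multinomial univ m * (∑ I ∈ S, c I * (-1) ^ ∑ i ∈ I, m i) * ∏ i, x i ^ m i := by
  have hsign : ∀ (I : Finset ι) (m : ι → ℕ),
      ∏ i, (if i ∈ I then (-1 : R) else 1) ^ m i = (-1) ^ ∑ i ∈ I, m i := by
    intro I m
    simp_rw [ite_pow, one_pow, prod_ite_mem, univ_inter, prod_pow_eq_pow_sum]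
  simp_rw [sum_pow_eq_sum_piAntidiag, mul_pow, prod_mul_distrib, hsign, mul_sum, sum_mul]
  rw [sum_comm]
  exact sum_congr rfl fun m _ => sum_congr rfl fun I _ => by ring

section OddCard

variable {ι : Type*} (s : Finset ι) (m : ι → ℕ)

theorem card_filter_odd_le_sum : #{i ∈ s | Odd (m i)} ≤ ∑ i ∈ s, m i := by
  rw [card_filter]
  exact sum_le_sum fun i _ => Nat.ite_odd_one_zero_le (m i)

theorem card_filter_odd_eq_sum_iff :
    #{i ∈ s | Odd (m i)} = ∑ i ∈ s, m i ↔ ∀ i ∈ s, m i ≤ 1 := by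
  rw [card_filter, sum_eq_sum_iff_of_le fun i _ => Nat.ite_odd_one_zero_le (m i)]
  refine forall₂_congr fun i _ => ?_
  rcases Nat.even_or_odd' (m i) with ⟨j, hj | hj⟩ <;> simp [hj, Nat.odd_iff]; omega

end OddCard

end Finset

theorem MvPolynomial.esymm_eq_sum_piAntidiag {σ R : Type*} [Fintype σ] [DecidableEq σ]
    [CommSemiring R] (d : ℕ) :
    esymm σ R d = ∑ m ∈ piAntidiag univ d with ∀ i, m i ≤ 1, ∏ i, X i ^ m i := by
  rw [esymm]
  refine sum_nbij' (fun S i => if i ∈ S then 1 else 0) (fun m => ({i | m i = 1} : Finset σ))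
    ?_ ?_ ?_ ?_ ?_
  · intro S hS
    rw [mem_powersetCard] at hS
    simp [mem_piAntidiag, hS.2, apply_ite (· ≤ 1)]
  · intro m hm
    rw [mem_filter, mem_piAntidiag] at hm
    rw [mem_powersetCard, card_filter, ← hm.1.1]
    refine ⟨subset_univ _, sum_congr rfl fun i _ => ?_⟩
    have := hm.2 i
    split_ifs <;> omega
  · intro S _
    ext i
    simp
  · intro m hm
    funext i
    have := (mem_filter.mp hm).2 i
    simp only [mem_filter, mem_univ, true_and]
    split_ifs <;> omega
  · intro S _
    simp [pow_ite, prod_ite_mem]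

theorem sum_powerset_filter_card_le_choose_mul_neg_one_pow_sum {n k : ℕ} (hn : 2 * k < n)
    {m : Fin n → ℕ} (hm : ∑ i, m i = 2 * k) :
    ∑ I ∈ (univ : Finset (Fin n)).powerset with #I ≤ k,
        (-1) ^ #I * ((n - k - #I - 1).choose (k - #I) : ℤ) * (n - 2 * #I : ℕ) *
          (-1) ^ ∑ i ∈ I, m i =
      if ∀ i, m i ≤ 1 then (4 : ℤ) ^ k * (n - 2 * k : ℕ) else 0 := by
  have hodd_le : #{i | Odd (m i)} ≤ 2 * k := hm ▸ card_filter_odd_le_sum univ m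
  have hodd_even : Even #{i | Odd (m i)} :=
    (even_sum_iff_even_card_odd m).mp (hm ▸ even_two_mul k)
  have hodd_eq : #{i | Odd (m i)} = 2 * k ↔ ∀ i, m i ≤ 1 := by
    simpa [hm] using card_filter_odd_eq_sum_iff univ m
  have hsigns := PowerSeries.sum_powersetCard_neg_one_pow_sum m
  simp only [Fintype.card_fin] at hsigns
  rw [sum_powerset_filter_card_le, ← if_congr hodd_eq rfl rfl,
    ← PowerSeries.sum_range_choose_mul_coeff_one_sub_X_pow_mul_one_add_X_pow hn hodd_even hodd_le]
  refine sum_congr rfl fun s _ => ?_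
  rw [← hsigns, mul_sum]
  exact sum_congr rfl fun I hI => by rw [(mem_powersetCard.mp hI).2]

open MvPolynomial

/-- Power sum decomposition of the elementary symmetric polynomial of even degree `d = 2k`
in `n > d` variables:
`2^d (n-d) d! σ_{d,n} = ∑_{|I| ≤ k} (-1)^{|I|} C(n-k-|I|-1, k-|I|) (n-2|I|) (δ(I,1)x_1+⋯)^d`. -/
theorem esymm_even_decomposition (d k n : ℕ) (hd : d = 2 * k) (hn : d < n) :
    ((2 ^ d * (n - d) * d.factorial : ℕ) : MvPolynomial (Fin n) ℂ) * esymm (Fin n) ℂ d =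
      ∑ I ∈ (Finset.univ : Finset (Fin n)).powerset.filter (fun I => I.card ≤ k),
        (-1 : MvPolynomial (Fin n) ℂ) ^ I.card *
          ((n - k - I.card - 1).choose (k - I.card) : MvPolynomial (Fin n) ℂ) *
          ((n - 2 * I.card : ℕ) : MvPolynomial (Fin n) ℂ) *
          (∑ i, (if i ∈ I then (-1 : MvPolynomial (Fin n) ℂ) else 1) * X i) ^ d := by
  subst hd
  have hcoeff : ∀ m ∈ piAntidiag univ (2 * k),
      ∑ I ∈ (univ : Finset (Fin n)).powerset with #I ≤ k,
        (-1 : MvPolynomial (Fin n) ℂ) ^ #I * ((n - k - #I - 1).choose (k - #I) : ℕ) *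
          (n - 2 * #I : ℕ) * (-1) ^ ∑ i ∈ I, m i =
      ((if ∀ i, m i ≤ 1 then (4 : ℤ) ^ k * (n - 2 * k : ℕ) else 0 : ℤ) :
        MvPolynomial (Fin n) ℂ) := by
    intro m hm
    rw [← sum_powerset_filter_card_le_choose_mul_neg_one_pow_sum hn (mem_piAntidiag.mp hm).1]
    push_cast
    rfl
  rw [sum_mul_sum_ite_neg_one_mul_pow, sum_congr rfl fun m hm => by rw [hcoeff m hm],
    esymm_eq_sum_piAntidiag, mul_sum, sum_filter]
  refine sum_congr rfl fun m hm => ?_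
  split_ifs with h
  · rw [Nat.multinomial_eq_factorial_of_le_one _ fun i _ => h i, (mem_piAntidiag.mp hm).1,
      pow_mul]
    push_cast
    ring
  · simp
end

section
/- The symmetric tensor rank of σ_{4,5}, the elementary symmetric polynomial of degree 4 in 5 variables, is at least 11. -/
open MvPolynomial Finset

/-! ### Auxiliary material -/

/-- The explicit form of `σ_{4,5}`. -/
noncomputable def Fex : MvPolynomial (Fin 5) ℂ :=
  X 0*X 1*X 2*X 3 + X 0*X 1*X 2*X 4 + X 0*X 1*X 3*X 4 + X 0*X 2*X 3*X 4 + X 1*X 2*X 3*X 4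

lemma esymm_eq_Fex : esymm (Fin 5) ℂ 4 = Fex := by
  rw [esymm]
  rw [show (powersetCard 4 (univ : Finset (Fin 5))) =
    {{0,1,2,3}, {0,1,2,4}, {0,1,3,4}, {0,2,3,4}, {1,2,3,4}} from by decide]
  simp (config := { decide := true }) [Finset.sum_insert, Finset.prod_insert, Finset.mem_insert,
    Finset.mem_singleton, Fex]
  ring

lemma d01 : pderiv 0 (pderiv 1 (esymm (Fin 5) ℂ 4)) = X 2*X 3 + X 2*X 4 + X 3*X 4 := by
  rw [esymm_eq_Fex]; simp [Fex, pderiv_mul, pderiv_X, Pi.single_apply]; try ring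

lemma d02 : pderiv 0 (pderiv 2 (esymm (Fin 5) ℂ 4)) = X 1*X 3 + X 1*X 4 + X 3*X 4 := by
  rw [esymm_eq_Fex]; simp [Fex, pderiv_mul, pderiv_X, Pi.single_apply]; try ring

lemma d03 : pderiv 0 (pderiv 3 (esymm (Fin 5) ℂ 4)) = X 1*X 2 + X 1*X 4 + X 2*X 4 := by
  rw [esymm_eq_Fex]; simp [Fex, pderiv_mul, pderiv_X, Pi.single_apply]; try ring

lemma d04 : pderiv 0 (pderiv 4 (esymm (Fin 5) ℂ 4)) = X 1*X 2 + X 1*X 3 + X 2*X 3 := by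
  rw [esymm_eq_Fex]; simp [Fex, pderiv_mul, pderiv_X, Pi.single_apply]; try ring

lemma d12 : pderiv 1 (pderiv 2 (esymm (Fin 5) ℂ 4)) = X 0*X 3 + X 0*X 4 + X 3*X 4 := by
  rw [esymm_eq_Fex]; simp [Fex, pderiv_mul, pderiv_X, Pi.single_apply]; try ring

lemma d13 : pderiv 1 (pderiv 3 (esymm (Fin 5) ℂ 4)) = X 0*X 2 + X 0*X 4 + X 2*X 4 := by
  rw [esymm_eq_Fex]; simp [Fex, pderiv_mul, pderiv_X, Pi.single_apply]; try ring

lemma d14 : pderiv 1 (pderiv 4 (esymm (Fin 5) ℂ 4)) = X 0*X 2 + X 0*X 3 + X 2*X 3 := by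
  rw [esymm_eq_Fex]; simp [Fex, pderiv_mul, pderiv_X, Pi.single_apply]; try ring

lemma d23 : pderiv 2 (pderiv 3 (esymm (Fin 5) ℂ 4)) = X 0*X 1 + X 0*X 4 + X 1*X 4 := by
  rw [esymm_eq_Fex]; simp [Fex, pderiv_mul, pderiv_X, Pi.single_apply]; try ring

lemma d24 : pderiv 2 (pderiv 4 (esymm (Fin 5) ℂ 4)) = X 0*X 1 + X 0*X 3 + X 1*X 3 := by
  rw [esymm_eq_Fex]; simp [Fex, pderiv_mul, pderiv_X, Pi.single_apply]; try ring

lemma d34 : pderiv 3 (pderiv 4 (esymm (Fin 5) ℂ 4)) = X 0*X 1 + X 0*X 2 + X 1*X 2 := by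
  rw [esymm_eq_Fex]; simp [Fex, pderiv_mul, pderiv_X, Pi.single_apply]; try ring

lemma hdiag (j : Fin 5) : pderiv j (pderiv j (esymm (Fin 5) ℂ 4)) = 0 := by
  rw [esymm_eq_Fex]
  fin_cases j <;> (simp [Fex, pderiv_mul, pderiv_X, Pi.single_apply]; try ring)

/-- first element of the `p`-th pair of indices -/
def pr1 : Fin 10 → Fin 5 := fun p =>
  if p.val < 4 then 0 else if p.val < 7 then 1 else if p.val < 9 then 2 else 3

/-- second element of the `p`-th pair of indices -/
def pr2 : Fin 10 → Fin 5 := fun p =>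
  if p.val = 0 then 1 else if p.val = 1 then 2 else if p.val = 2 then 3 else if p.val = 3 then 4
  else if p.val = 4 then 2 else if p.val = 5 then 3 else if p.val = 6 then 4
  else if p.val = 7 then 3 else if p.val = 8 then 4 else 4

/-- the pairs `p` and `q` share an index -/
def shares (p q : Fin 10) : Prop :=
  pr1 p = pr1 q ∨ pr1 p = pr2 q ∨ pr2 p = pr1 q ∨ pr2 p = pr2 q

instance (p q : Fin 10) : Decidable (shares p q) := by unfold shares; infer_instance

/-- the disjointness (Petersen graph) matrix of the ten pairs, over `ℤ` -/
def intA : Matrix (Fin 10) (Fin 10) ℤ := Matrix.of fun p q => if shares p q then 0 else 1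

/-- six times the inverse of `intA` -/
def intN : Matrix (Fin 10) (Fin 10) ℤ := Matrix.of fun p q =>
  if p = q ∨ ¬ shares p q then 2 else -1

lemma intA_mul_intN : ∀ p q, (intA * intN) p q = if p = q then 6 else 0 := by decide

lemma termderiv (a : Fin 5 → ℂ) (b c j k : Fin 5) :
    constantCoeff (pderiv b (pderiv c (pderiv j (pderiv k ((∑ m, C (a m) * X m) ^ 4))))) =
      24 * a b * a c * a j * a k := by
  have hd : ∀ t : Fin 5, pderiv t (∑ m, C (a m) * X m) = C (a t) := by
    intro t; simp [pderiv_X, Pi.single_apply, Finset.mul_sum]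
  have hc : constantCoeff (∑ m, C (a m) * X m) = 0 := by simp
  simp only [pderiv_pow, pderiv_mul, hd, pderiv_C, map_mul, map_add, map_sum, map_pow,
    map_natCast, map_zero, map_one, constantCoeff_C, hc]
  ring

lemma sumderiv (a : Fin 10 → Fin 5 → ℂ) (b c j k : Fin 5) :
    constantCoeff (pderiv b (pderiv c (pderiv j (pderiv k
        (∑ i : Fin 10, (∑ m, C (a i m) * X m) ^ 4))))) =
      ∑ i : Fin 10, 24 * a i b * a i c * a i j * a i k := by
  simp only [map_sum, termderiv]

set_option maxHeartbeats 4000000 in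
/-- The main lower-bound lemma: `σ_{4,5}` is not a sum of ten fourth powers
of linear forms. -/
lemma key (a : Fin 10 → Fin 5 → ℂ)
    (h : esymm (Fin 5) ℂ 4 = ∑ i : Fin 10, (∑ j, C (a i j) * X j) ^ 4) : False := by
  have hT : ∀ b c j k : Fin 5,
      (∑ i : Fin 10, 24 * a i b * a i c * a i j * a i k) =
        constantCoeff (pderiv b (pderiv c (pderiv j (pderiv k (esymm (Fin 5) ℂ 4))))) := by
    intro b c j k
    rw [h, sumderiv]
  have eq1 : ∀ p q : Fin 10,
      (∑ i : Fin 10, 24 * a i (pr1 p) * a i (pr2 p) * a i (pr1 q) * a i (pr2 q)) =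
        ((intA p q : ℤ) : ℂ) := by
    intro p q
    rw [hT]
    fin_cases p <;> fin_cases q <;>
    · norm_num [pr1, pr2, intA, shares]
      simp only [d01, d02, d03, d04, d12, d13, d14, d23, d24, d34]
      simp [pderiv_mul, pderiv_X, Pi.single_apply]
  have eq2 : ∀ (j : Fin 5) (q : Fin 10),
      (∑ i : Fin 10, 24 * a i (pr1 q) * a i (pr2 q) * a i j * a i j) = 0 := by
    intro j q
    rw [hT, hdiag j]
    simp
  set B : Matrix (Fin 10) (Fin 10) ℂ :=
    Matrix.of (fun p i => a i (pr1 p) * a i (pr2 p)) with hB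
  set D : Matrix (Fin 10) (Fin 10) ℂ :=
    Matrix.of (fun i q => 24 * (a i (pr1 q) * a i (pr2 q))) with hD
  set Cm : Matrix (Fin 5) (Fin 10) ℂ :=
    Matrix.of (fun (j : Fin 5) (i : Fin 10) => 24 * a i j * a i j) with hCm
  have hBD : B * D = intA.map (Int.castRingHom ℂ) := by
    ext p q
    rw [Matrix.mul_apply, Matrix.map_apply, eq_intCast, ← eq1 p q]
    refine Finset.sum_congr rfl fun i _ => ?_
    simp only [hB, hD, Matrix.of_apply]
    ring
  have hCB : Cm * B.transpose = 0 := by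
    ext j q
    rw [Matrix.mul_apply, Matrix.zero_apply, ← eq2 j q]
    refine Finset.sum_congr rfl fun i _ => ?_
    simp only [hB, hCm, Matrix.of_apply, Matrix.transpose_apply]
    ring
  have hBDN : B * (D * intN.map (Int.castRingHom ℂ)) = (6 : ℂ) • 1 := by
    rw [← Matrix.mul_assoc, hBD, ← Matrix.map_mul]
    ext p q
    rw [Matrix.map_apply, intA_mul_intN p q]
    simp [Matrix.one_apply, apply_ite]
  have hBM : B * ((6 : ℂ)⁻¹ • (D * intN.map (Int.castRingHom ℂ))) = 1 := by
    rw [Matrix.mul_smul, hBDN, smul_smul]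
    norm_num
  have hMB := mul_eq_one_comm.mp hBM
  have hBt : B.transpose * ((6 : ℂ)⁻¹ • (D * intN.map (Int.castRingHom ℂ))).transpose = 1 := by
    rw [← Matrix.transpose_mul, hMB, Matrix.transpose_one]
  have hC0 : Cm = 0 := by
    calc Cm = Cm * (B.transpose *
        ((6 : ℂ)⁻¹ • (D * intN.map (Int.castRingHom ℂ))).transpose) := by
          rw [hBt, Matrix.mul_one]
    _ = (Cm * B.transpose) * ((6 : ℂ)⁻¹ • (D * intN.map (Int.castRingHom ℂ))).transpose := by
          rw [Matrix.mul_assoc]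
    _ = 0 := by rw [hCB, Matrix.zero_mul]
  have ha : ∀ (i : Fin 10) (j : Fin 5), a i j = 0 := by
    intro i j
    have h0 := congrFun (congrFun hC0 j) i
    simp only [hCm, Matrix.of_apply, Matrix.zero_apply] at h0
    exact mul_self_eq_zero.mp (by linear_combination h0 / 24)
  have h10 := eq1 0 9
  rw [show ((intA 0 9 : ℤ) : ℂ) = 1 from by norm_num [show intA 0 9 = 1 from by decide]] at h10
  simp [ha] at h10

lemma scalar8 (r r' : ℂ) (hr : r^4 = 1/192) (hr' : r'^4 = -(1/192)) (y0 y1 y2 y3 : ℂ) :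
    y0*y1*y2*y3 = (r*(y0+y1+y2+y3))^4 + (r*(y0+y1-y2-y3))^4 + (r*(y0-y1+y2-y3))^4
      + (r*(y0-y1-y2+y3))^4 + (r'*(y0+y1+y2-y3))^4 + (r'*(y0+y1-y2+y3))^4
      + (r'*(y0-y1+y2+y3))^4 + (r'*(y0-y1-y2-y3))^4 := by
  linear_combination
    (-((y0+y1+y2+y3)^4 + (y0+y1-y2-y3)^4 + (y0-y1+y2-y3)^4 + (y0-y1-y2+y3)^4)) * hr
    + (-((y0+y1+y2-y3)^4 + (y0+y1-y2+y3)^4 + (y0-y1+y2+y3)^4 + (y0-y1-y2-y3)^4)) * hr'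

set_option maxHeartbeats 1000000 in
lemma rep0 (r r' : ℂ) (hr : r^4 = 1/192) (hr' : r'^4 = -(1/192)) :
    ∃ L : Fin 8 → Fin 5 → ℂ,
      (X 1*X 2*X 3*X 4 : MvPolynomial (Fin 5) ℂ) = ∑ i, (∑ j, C (L i j) * X j) ^ 4 := by
  refine ⟨![![0,r,r,r,r], ![0,r,r,-r,-r], ![0,r,-r,r,-r], ![0,r,-r,-r,r], ![0,r',r',r',-r'], ![0,r',r',-r',r'], ![0,r',-r',r',r'], ![0,r',-r',-r',-r']], ?_⟩
  apply MvPolynomial.funext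
  intro x
  simp only [Fin.sum_univ_succ, Fin.sum_univ_zero, Matrix.cons_val_zero, Matrix.cons_val_succ]
  simp only [map_sum, map_pow, map_mul, map_add, map_zero, eval_C, eval_X,
    show (Fin.succ 0 : Fin 5) = 1 from rfl,
    show (Fin.succ (Fin.succ 0) : Fin 5) = 2 from rfl,
    show (Fin.succ (Fin.succ (Fin.succ 0)) : Fin 5) = 3 from rfl,
    show (Fin.succ (Fin.succ (Fin.succ (Fin.succ 0))) : Fin 5) = 4 from rfl]
  rw [scalar8 r r' hr hr' (x 1) (x 2) (x 3) (x 4)]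
  ring

set_option maxHeartbeats 1000000 in
lemma rep1 (r r' : ℂ) (hr : r^4 = 1/192) (hr' : r'^4 = -(1/192)) :
    ∃ L : Fin 8 → Fin 5 → ℂ,
      (X 0*X 2*X 3*X 4 : MvPolynomial (Fin 5) ℂ) = ∑ i, (∑ j, C (L i j) * X j) ^ 4 := by
  refine ⟨![![r,0,r,r,r], ![r,0,r,-r,-r], ![r,0,-r,r,-r], ![r,0,-r,-r,r], ![r',0,r',r',-r'], ![r',0,r',-r',r'], ![r',0,-r',r',r'], ![r',0,-r',-r',-r']], ?_⟩
  apply MvPolynomial.funext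
  intro x
  simp only [Fin.sum_univ_succ, Fin.sum_univ_zero, Matrix.cons_val_zero, Matrix.cons_val_succ]
  simp only [map_sum, map_pow, map_mul, map_add, map_zero, eval_C, eval_X,
    show (Fin.succ 0 : Fin 5) = 1 from rfl,
    show (Fin.succ (Fin.succ 0) : Fin 5) = 2 from rfl,
    show (Fin.succ (Fin.succ (Fin.succ 0)) : Fin 5) = 3 from rfl,
    show (Fin.succ (Fin.succ (Fin.succ (Fin.succ 0))) : Fin 5) = 4 from rfl]
  rw [scalar8 r r' hr hr' (x 0) (x 2) (x 3) (x 4)]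
  ring

set_option maxHeartbeats 1000000 in
lemma rep2 (r r' : ℂ) (hr : r^4 = 1/192) (hr' : r'^4 = -(1/192)) :
    ∃ L : Fin 8 → Fin 5 → ℂ,
      (X 0*X 1*X 3*X 4 : MvPolynomial (Fin 5) ℂ) = ∑ i, (∑ j, C (L i j) * X j) ^ 4 := by
  refine ⟨![![r,r,0,r,r], ![r,r,0,-r,-r], ![r,-r,0,r,-r], ![r,-r,0,-r,r], ![r',r',0,r',-r'], ![r',r',0,-r',r'], ![r',-r',0,r',r'], ![r',-r',0,-r',-r']], ?_⟩
  apply MvPolynomial.funext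
  intro x
  simp only [Fin.sum_univ_succ, Fin.sum_univ_zero, Matrix.cons_val_zero, Matrix.cons_val_succ]
  simp only [map_sum, map_pow, map_mul, map_add, map_zero, eval_C, eval_X,
    show (Fin.succ 0 : Fin 5) = 1 from rfl,
    show (Fin.succ (Fin.succ 0) : Fin 5) = 2 from rfl,
    show (Fin.succ (Fin.succ (Fin.succ 0)) : Fin 5) = 3 from rfl,
    show (Fin.succ (Fin.succ (Fin.succ (Fin.succ 0))) : Fin 5) = 4 from rfl]
  rw [scalar8 r r' hr hr' (x 0) (x 1) (x 3) (x 4)]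
  ring

set_option maxHeartbeats 1000000 in
lemma rep3 (r r' : ℂ) (hr : r^4 = 1/192) (hr' : r'^4 = -(1/192)) :
    ∃ L : Fin 8 → Fin 5 → ℂ,
      (X 0*X 1*X 2*X 4 : MvPolynomial (Fin 5) ℂ) = ∑ i, (∑ j, C (L i j) * X j) ^ 4 := by
  refine ⟨![![r,r,r,0,r], ![r,r,-r,0,-r], ![r,-r,r,0,-r], ![r,-r,-r,0,r], ![r',r',r',0,-r'], ![r',r',-r',0,r'], ![r',-r',r',0,r'], ![r',-r',-r',0,-r']], ?_⟩
  apply MvPolynomial.funext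
  intro x
  simp only [Fin.sum_univ_succ, Fin.sum_univ_zero, Matrix.cons_val_zero, Matrix.cons_val_succ]
  simp only [map_sum, map_pow, map_mul, map_add, map_zero, eval_C, eval_X,
    show (Fin.succ 0 : Fin 5) = 1 from rfl,
    show (Fin.succ (Fin.succ 0) : Fin 5) = 2 from rfl,
    show (Fin.succ (Fin.succ (Fin.succ 0)) : Fin 5) = 3 from rfl,
    show (Fin.succ (Fin.succ (Fin.succ (Fin.succ 0))) : Fin 5) = 4 from rfl]
  rw [scalar8 r r' hr hr' (x 0) (x 1) (x 2) (x 4)]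
  ring

set_option maxHeartbeats 1000000 in
lemma rep4 (r r' : ℂ) (hr : r^4 = 1/192) (hr' : r'^4 = -(1/192)) :
    ∃ L : Fin 8 → Fin 5 → ℂ,
      (X 0*X 1*X 2*X 3 : MvPolynomial (Fin 5) ℂ) = ∑ i, (∑ j, C (L i j) * X j) ^ 4 := by
  refine ⟨![![r,r,r,r,0], ![r,r,-r,-r,0], ![r,-r,r,-r,0], ![r,-r,-r,r,0], ![r',r',r',-r',0], ![r',r',-r',r',0], ![r',-r',r',r',0], ![r',-r',-r',-r',0]], ?_⟩
  apply MvPolynomial.funext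
  intro x
  simp only [Fin.sum_univ_succ, Fin.sum_univ_zero, Matrix.cons_val_zero, Matrix.cons_val_succ]
  simp only [map_sum, map_pow, map_mul, map_add, map_zero, eval_C, eval_X,
    show (Fin.succ 0 : Fin 5) = 1 from rfl,
    show (Fin.succ (Fin.succ 0) : Fin 5) = 2 from rfl,
    show (Fin.succ (Fin.succ (Fin.succ 0)) : Fin 5) = 3 from rfl,
    show (Fin.succ (Fin.succ (Fin.succ (Fin.succ 0))) : Fin 5) = 4 from rfl]
  rw [scalar8 r r' hr hr' (x 0) (x 1) (x 2) (x 3)]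
  ring

lemma rep_add {F G : MvPolynomial (Fin 5) ℂ} {s t : ℕ}
    (hF : ∃ L : Fin s → Fin 5 → ℂ, F = ∑ i, (∑ j, C (L i j) * X j) ^ 4)
    (hG : ∃ M : Fin t → Fin 5 → ℂ, G = ∑ i, (∑ j, C (M i j) * X j) ^ 4) :
    ∃ N : Fin (s + t) → Fin 5 → ℂ, F + G = ∑ i, (∑ j, C (N i j) * X j) ^ 4 := by
  obtain ⟨L, rfl⟩ := hF
  obtain ⟨M, rfl⟩ := hG
  refine ⟨Fin.append L M, ?_⟩
  rw [Fin.sum_univ_add]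
  simp [Fin.append_left, Fin.append_right]

lemma upper40 : ∃ L : Fin 40 → Fin 5 → ℂ,
    esymm (Fin 5) ℂ 4 = ∑ i, (∑ j, C (L i j) * X j) ^ 4 := by
  obtain ⟨r, hr⟩ := IsAlgClosed.exists_pow_nat_eq (1/192 : ℂ) (n := 4) (by norm_num)
  obtain ⟨r', hr'⟩ := IsAlgClosed.exists_pow_nat_eq (-(1/192) : ℂ) (n := 4) (by norm_num)
  have h := rep_add (rep_add (rep_add (rep_add
    (rep4 r r' hr hr') (rep3 r r' hr hr')) (rep2 r r' hr hr'))
    (rep1 r r' hr hr')) (rep0 r r' hr hr')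
  rw [esymm_eq_Fex]
  exact h

/-- The Waring rank of `σ_{4,5}` is at least `11`. -/
theorem waringRank_esymm_4_5_ge : 11 ≤ waringRank 4 (esymm (Fin 5) ℂ 4) := by
  rw [waringRank]
  apply le_csInf
  · obtain ⟨L, hL⟩ := upper40
    exact ⟨40, L, hL⟩
  · rintro s ⟨L, hL⟩
    by_contra hlt
    push_neg at hlt
    have hs : s ≤ 10 := Nat.lt_succ_iff.mp hlt
    set g : ℕ → MvPolynomial (Fin 5) ℂ :=
      fun n => if h : n < s then (∑ j, C (L ⟨n, h⟩ j) * X j) ^ 4 else 0 with hgdef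
    refine key (fun i j => if h : (i : ℕ) < s then L ⟨i, h⟩ j else 0) ?_
    rw [hL]
    calc ∑ i : Fin s, (∑ j, C (L i j) * X j) ^ 4
        = ∑ i : Fin s, g i := by
          refine Finset.sum_congr rfl fun i _ => ?_
          simp [hgdef, Fin.eta]
    _ = ∑ n ∈ Finset.range s, g n := Fin.sum_univ_eq_sum_range g s
    _ = ∑ n ∈ Finset.range 10, g n := by
          refine Finset.sum_subset (f := g) (Finset.range_subset_range.mpr hs) fun x _ hx => ?_
          simp only [hgdef]
          rw [dif_neg (by simpa using hx)]
    _ = ∑ i : Fin 10, g i := (Fin.sum_univ_eq_sum_range g 10).symm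
    _ = ∑ i : Fin 10, (∑ j, C (if h : (i : ℕ) < s then L ⟨i, h⟩ j else 0) * X j) ^ 4 := by
          refine Finset.sum_congr rfl fun i _ => ?_
          by_cases h : (i : ℕ) < s
          · simp [hgdef, h]
          · simp [hgdef, h, zero_pow]
end
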